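/- arXiv:2210.16959 — 9 statements merged into one kernel-verified Lean document; each statement's English description precedes it below -/
import Mathlib

section
/- For every integer n ≥ 1 the 2-adic valuation of the Tribonacci number T(n) is given by: ν₂(T(n)) = 0 if n ≡ 1, 2 (mod 4); ν₂(T(n)) = 1 if n ≡ 3, 11 (mod 16); ν₂(T(n)) = 2 if n ≡ 4, 8 (mod 16); ν₂(T(n)) = 3 if n ≡ 7 (mod 16); ν₂(T(n)) = ν₂(n) − 1 if n ≡ 0 (mod 16); ν₂(T(n)) = ν₂(n+4) − 1 if n ≡ 12 (mod 16); ν₂(T(n)) = ν₂(n+17) + 1 if n ≡ 15 (mod 32); ν₂(T(n)) = ν₂(n+1) + 1 if n ≡ 31 (mod 32). -/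
/-!
Tribonacci numbers satisfy the addition formula
`T (m + n) = T (m + 1) * T n + T m * (T (n + 1) - T n) + T (m - 1) * T (n - 1)`.
Doubling with it shows, by induction on `j ≥ 4`, that `T (2^(j+1)) = 2^j * odd`,
`T (2^(j+1) - 1) = 2^(j+2) * odd` and `T (2^(j+1) + 1) ≡ 1 [ZMOD 2^j]`. Hence shifting the index
by `2^(j+1)` changes `T n` by `2^j * (U T(n) + A (T(n+1) - T(n)) + 4 B T(n-1))` for some integers
`A, B, U`: the sequence has period `2^(j+1)` modulo `2^j`, and even modulo `2^(j+2)` along indices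
with `4 ∣ T(n), T(n+1)`.

For `j = 4` this reduces the classes with `ν₂(T n) ≤ 3` to a finite check of `T 0, …, T 31`
modulo 16. Otherwise the periodicity carries the valuations at `2^(j+1)` and `2^(j+1) - 1` over to
all `2^(j+1) * m` and `2^(j+1) * m - 1` with `m` odd, which are the classes `n ≡ 0 (mod 16)` and
`n ≡ 31 (mod 32)`. The classes `n ≡ 12 (mod 16)` and `n ≡ 15 (mod 32)` reduce to these through
`T n = 2 T(n+3) - T(n+4)` and `T n = 56 T(n+17) - 103 T(n+16)`, the addition formula at the zeros
`T (-4) = T (-17) = 0`.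
-/

theorem Int.modEq_of_forall_add_one_modEq {f : ℤ → ℤ} {M : ℤ}
    (h : ∀ k, f (k + 1) ≡ f k [ZMOD M]) (k : ℤ) : f k ≡ f 0 [ZMOD M] := by
  induction k using Int.induction_on with
  | zero => exact Int.ModEq.refl _
  | succ k ih => exact (h k).trans ih
  | pred k ih =>
    exact (by simpa using (h (-k - 1)).symm : f (-k - 1) ≡ f (-k) [ZMOD M]).trans ih

theorem Odd.two_pow_mul_modEq {u : ℤ} (hu : Odd u) (k : ℕ) :
    2 ^ k * u ≡ 2 ^ k [ZMOD 2 ^ (k + 1)] := by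
  obtain ⟨a, rfl⟩ := hu
  exact Int.modEq_iff_dvd.2 ⟨-a, by ring⟩

theorem padicValInt_two_eq_of_modEq {x : ℤ} {k : ℕ} (h : x ≡ 2 ^ k [ZMOD 2 ^ (k + 1)]) :
    padicValInt 2 x = k := by
  have hdvd : (2 : ℤ) ^ k ∣ x := (h.of_dvd (pow_dvd_pow 2 k.le_succ)).dvd_iff.2 dvd_rfl
  have hndvd : ¬ (2 : ℤ) ^ (k + 1) ∣ x := fun hx =>
    absurd (h.dvd_iff.1 hx) (by rw [pow_dvd_pow_iff two_ne_zero (by decide)]; omega)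
  have hx : x ≠ 0 := by rintro rfl; exact hndvd (dvd_zero _)
  have h₁ := (padicValInt_dvd_iff (p := 2) k x).1 (by exact_mod_cast hdvd)
  have h₂ := (padicValInt_dvd_iff (p := 2) (k + 1) x).not.1 (by exact_mod_cast hndvd)
  omega

theorem Int.exists_two_pow_mul_odd_of_two_pow_dvd {n : ℤ} {k : ℕ} (hn : n ≠ 0)
    (h : 2 ^ (k + 1) ∣ n) :
    ∃ j m, k ≤ j ∧ Odd m ∧ padicValInt 2 n = j + 1 ∧ n = 2 ^ (j + 1) * m := by
  have hk := ((padicValInt_dvd_iff (p := 2) (k + 1) n).1 (by exact_mod_cast h)).resolve_left hn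
  obtain ⟨m, hm⟩ := padicValInt_dvd (p := 2) n
  refine ⟨padicValInt 2 n - 1, m, by omega, ?_, by omega, ?_⟩
  swap
  · rw [Nat.sub_add_cancel (by omega)]
    exact_mod_cast hm
  rw [← Int.not_even_iff_odd, even_iff_two_dvd]
  rintro ⟨m', rfl⟩
  have h2 : (2 : ℤ) ^ (padicValInt 2 n + 1) ∣ n :=
    ⟨m', by rw [pow_succ, mul_assoc]; exact_mod_cast hm⟩
  have := (padicValInt_dvd_iff (p := 2) _ n).1 (by exact_mod_cast h2)
  omega

def SatisfiesTribonacciRec (f : ℤ → ℤ) : Prop :=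
  ∀ n, f (n + 3) = f (n + 2) + f (n + 1) + f n

namespace SatisfiesTribonacciRec

variable {f g : ℤ → ℤ}

theorem sub (hf : SatisfiesTribonacciRec f) (hg : SatisfiesTribonacciRec g) :
    SatisfiesTribonacciRec (fun n => f n - g n) :=
  fun n => by dsimp only; rw [hf n, hg n]; ring

theorem const_mul (hf : SatisfiesTribonacciRec f) (a : ℤ) :
    SatisfiesTribonacciRec (fun n => a * f n) :=
  fun n => by dsimp only; rw [hf n]; ring

theorem eq_zero (hf : SatisfiesTribonacciRec f) (h₀ : f 0 = 0) (h₁ : f 1 = 0) (h₂ : f 2 = 0) :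
    f = 0 := by
  suffices ∀ n : ℤ, f n = 0 ∧ f (n + 1) = 0 ∧ f (n + 2) = 0 from funext fun n => (this n).1
  intro n
  induction n using Int.induction_on with
  | zero => simp [h₀, h₁, h₂]
  | succ k ih =>
    rw [show (k : ℤ) + 1 + 1 = k + 2 by ring, show (k : ℤ) + 1 + 2 = k + 3 by ring, hf,
      ih.1, ih.2.1, ih.2.2]
    norm_num
  | pred k ih =>
    have h := hf (-k - 1)
    rw [show -(k : ℤ) - 1 + 3 = -k + 2 by ring, show -(k : ℤ) - 1 + 2 = -k + 1 by ring,
      sub_add_cancel, ih.1, ih.2.1, ih.2.2] at h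
    rw [sub_add_cancel, show -(k : ℤ) - 1 + 2 = -k + 1 by ring, ih.1, ih.2.1]
    exact ⟨by linarith, rfl, rfl⟩

theorem ext (hf : SatisfiesTribonacciRec f) (hg : SatisfiesTribonacciRec g)
    (h₀ : f 0 = g 0) (h₁ : f 1 = g 1) (h₂ : f 2 = g 2) : f = g :=
  funext fun n => sub_eq_zero.1 <| congrFun ((hf.sub hg).eq_zero (sub_eq_zero.2 h₀)
    (sub_eq_zero.2 h₁) (sub_eq_zero.2 h₂)) n

theorem comp_add (hf : SatisfiesTribonacciRec f) (c : ℤ) :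
    SatisfiesTribonacciRec (fun n => f (n + c)) := fun n => by
  simp only [add_right_comm n _ c]
  exact hf (n + c)

end SatisfiesTribonacciRec

def tribonacci : ℕ → ℕ
  | 0 => 0
  | 1 => 1
  | 2 => 1
  | n + 3 => tribonacci (n + 2) + tribonacci (n + 1) + tribonacci n

theorem tribonacci_modEq_two_pow_of_lt : ∀ c < 32,
    ((c % 4 = 1 ∨ c % 4 = 2) → tribonacci c ≡ 2 ^ 0 [MOD 2 ^ 1]) ∧
    ((c % 16 = 3 ∨ c % 16 = 11) → tribonacci c ≡ 2 ^ 1 [MOD 2 ^ 2]) ∧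
    ((c % 16 = 4 ∨ c % 16 = 8) → tribonacci c ≡ 2 ^ 2 [MOD 2 ^ 3]) ∧
    (c % 16 = 7 → tribonacci c ≡ 2 ^ 3 [MOD 2 ^ 4]) := by
  decide

structure IsTribonacci (T : ℤ → ℤ) : Prop where
  recurrence : SatisfiesTribonacciRec T
  zero : T 0 = 0
  one : T 1 = 1
  two : T 2 = 1

namespace IsTribonacci

variable {T : ℤ → ℤ}

theorem apply_natCast (hT : IsTribonacci T) (n : ℕ) : T n = tribonacci n := by
  induction n using tribonacci.induct with
  | case1 => exact hT.zero
  | case2 => exact hT.one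
  | case3 => exact hT.two
  | case4 n ih₂ ih₁ ih₀ =>
    rw [tribonacci, Nat.cast_add, Nat.cast_add, ← ih₂, ← ih₁, ← ih₀]
    convert hT.recurrence n using 2 <;> push_cast <;> ring

theorem apply_ofNat (hT : IsTribonacci T) (n : ℕ) [n.AtLeastTwo] :
    T (OfNat.ofNat n) = tribonacci (OfNat.ofNat n) :=
  hT.apply_natCast n

theorem apply_neg_one (hT : IsTribonacci T) : T (-1) = 0 := by
  simpa [hT.zero, hT.one, hT.two] using hT.recurrence (-1)

theorem apply_add (hT : IsTribonacci T) (m n : ℤ) :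
    T (m + n) = T (m + 1) * T n + T m * (T (n + 1) - T n) + T (m - 1) * T (n - 1) := by
  have hrec : SatisfiesTribonacciRec fun m =>
      T (m + 1) * T n + T m * (T (n + 1) - T n) + T (m - 1) * T (n - 1) := fun m => by
    dsimp only
    rw [show m + 3 + 1 = m + 1 + 3 by ring, show m + 3 - 1 = m - 1 + 3 by ring, hT.recurrence,
      hT.recurrence, hT.recurrence]
    ring_nf
  refine congrFun ((hT.recurrence.comp_add n).ext hrec ?_ ?_ ?_) m
  · simp [hT.zero, hT.one, hT.apply_neg_one]
  · norm_num [hT.zero, hT.one, hT.two, add_comm]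
  · have h := hT.recurrence (n - 1)
    rw [show n - 1 + 3 = 2 + n by ring, show n - 1 + 2 = n + 1 by ring, sub_add_cancel] at h
    norm_num [h, hT.one, hT.two, hT.apply_ofNat, show ((tribonacci 3 : ℕ) : ℤ) = 2 by decide]
    ring

theorem exists_apply_two_pow (hT : IsTribonacci T) {j : ℕ} (hj : 4 ≤ j) :
    ∃ A B U : ℤ, Odd A ∧ Odd B ∧ T (2 ^ (j + 1) - 1) = 2 ^ (j + 2) * B ∧
      T (2 ^ (j + 1)) = 2 ^ j * A ∧ T (2 ^ (j + 1) + 1) = 1 + 2 ^ j * U := by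
  obtain ⟨t, rfl⟩ := Nat.exists_eq_add_of_le' hj
  clear hj
  induction t with
  | zero =>
    refine ⟨6184381, 840595, 11374850, by decide, by decide, ?_, ?_, ?_⟩ <;>
      norm_num [hT.apply_ofNat] <;> decide
  | succ t ih =>
    obtain ⟨A, B, U, hA, hB, hm1, h0, hp1⟩ := ih
    set P : ℤ := 2 ^ (t + 4 + 1)
    have hm2 : T (P - 2) = T (P + 1) - T P - T (P - 1) := by
      have h := hT.recurrence (P - 2); ring_nf at h ⊢; linarith
    have hp2 : T (P + 2) = T (P + 1) + T P + T (P - 1) := by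
      have h := hT.recurrence (P - 1); ring_nf at h ⊢; linarith
    have hP : (2 : ℤ) ^ (t + 1 + 4 + 1) = P + P := by ring
    refine ⟨A + 2 ^ (t + 3) * (2 * A * U - A ^ 2 + 16 * B ^ 2),
      B + 2 ^ (t + 1) * (A ^ 2 + 8 * B * U - 8 * A * B - 16 * B ^ 2),
      U + 2 ^ (t + 3) * (A ^ 2 + 8 * A * B + U ^ 2), ?_, ?_, ?_, ?_, ?_⟩
    · exact hA.add_even ((Int.even_pow.2 ⟨even_two, by omega⟩).mul_right _)
    · exact hB.add_even ((Int.even_pow.2 ⟨even_two, by omega⟩).mul_right _)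
    · rw [hP, show P + P - 1 = P - 1 + P by ring, hT.apply_add, sub_add_cancel,
        show P - 1 - 1 = P - 2 by ring, hm2, hm1, h0, hp1]
      ring
    · rw [hP, hT.apply_add, hm1, h0, hp1]
      ring
    · rw [hP, show P + P + 1 = P + 1 + P by ring, hT.apply_add, add_sub_cancel_right,
        show P + 1 + 1 = P + 2 by ring, hp2, hm1, h0, hp1]
      ring

theorem exists_apply_add_two_pow (hT : IsTribonacci T) {j : ℕ} (hj : 4 ≤ j) (n : ℤ) :
    ∃ A B U : ℤ, T (n + 2 ^ (j + 1)) =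
      T n + 2 ^ j * (U * T n + A * (T (n + 1) - T n) + 4 * B * T (n - 1)) := by
  obtain ⟨A, B, U, -, -, hm1, h0, hp1⟩ := hT.exists_apply_two_pow hj
  refine ⟨A, B, U, ?_⟩
  rw [add_comm, hT.apply_add, hm1, h0, hp1]
  ring

theorem apply_add_two_pow_modEq (hT : IsTribonacci T) {j : ℕ} (hj : 4 ≤ j) (n : ℤ) :
    T (n + 2 ^ (j + 1)) ≡ T n [ZMOD 2 ^ j] := by
  obtain ⟨A, B, U, h⟩ := hT.exists_apply_add_two_pow hj n
  rw [h]
  exact Int.add_modulus_mul_modEq_iff.2 rfl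

theorem apply_add_two_pow_modEq_of_four_dvd (hT : IsTribonacci T) {j : ℕ} (hj : 4 ≤ j)
    {n : ℤ} (h₀ : 4 ∣ T n) (h₁ : 4 ∣ T (n + 1)) :
    T (n + 2 ^ (j + 1)) ≡ T n [ZMOD 2 ^ (j + 2)] := by
  obtain ⟨A, B, U, h⟩ := hT.exists_apply_add_two_pow hj n
  rw [h, Int.add_modEq_left_iff, pow_add]
  refine mul_dvd_mul_left _ ?_
  norm_num only
  exact dvd_add (dvd_add (h₀.mul_left U) ((dvd_sub h₁ h₀).mul_left A))
    (dvd_mul_of_dvd_left (dvd_mul_right 4 B) _)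

theorem apply_add_mul_two_pow_modEq (hT : IsTribonacci T) {j : ℕ} (hj : 4 ≤ j) (n k : ℤ) :
    T (n + k * 2 ^ (j + 1)) ≡ T n [ZMOD 2 ^ j] := by
  simpa using Int.modEq_of_forall_add_one_modEq (f := fun k => T (n + k * 2 ^ (j + 1)))
    (fun k => by
      simpa [add_mul, add_assoc] using hT.apply_add_two_pow_modEq hj (n + k * 2 ^ (j + 1))) k

theorem apply_add_mul_two_pow_modEq_of_four_dvd (hT : IsTribonacci T) {j : ℕ} (hj : 4 ≤ j)
    {n : ℤ} (h₀ : 4 ∣ T n) (h₁ : 4 ∣ T (n + 1)) (k : ℤ) :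
    T (n + k * 2 ^ (j + 1)) ≡ T n [ZMOD 2 ^ (j + 2)] := by
  have h4 : (4 : ℤ) ∣ 2 ^ j := by simpa using pow_dvd_pow (2 : ℤ) (show 2 ≤ j by omega)
  refine (Int.modEq_of_forall_add_one_modEq (f := fun k => T (n + k * 2 ^ (j + 1)))
    (fun k => ?_) k).trans (by simp)
  have h₀' := ((hT.apply_add_mul_two_pow_modEq hj n k).of_dvd h4).dvd_iff.2 h₀
  have h₁' := ((hT.apply_add_mul_two_pow_modEq hj (n + 1) k).of_dvd h4).dvd_iff.2 h₁
  rw [add_right_comm] at h₁'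
  simpa [add_mul, add_assoc] using hT.apply_add_two_pow_modEq_of_four_dvd hj h₀' h₁'

theorem apply_two_pow_mul_odd_modEq (hT : IsTribonacci T) {j : ℕ} (hj : 3 ≤ j) {m : ℤ}
    (hm : Odd m) : T (2 ^ (j + 1) * m) ≡ 2 ^ j [ZMOD 2 ^ (j + 1)] := by
  obtain ⟨k, rfl⟩ := hm
  rw [show 2 ^ (j + 1) * (2 * k + 1) = 2 ^ (j + 1) + k * 2 ^ (j + 1 + 1) by ring]
  refine (hT.apply_add_mul_two_pow_modEq (by omega) _ k).trans ?_
  rcases (show j = 3 ∨ 4 ≤ j by omega) with rfl | hj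
  · norm_num [hT.apply_ofNat, Int.ModEq]
    decide
  · obtain ⟨A, B, U, hA, -, -, h0, -⟩ := hT.exists_apply_two_pow hj
    rw [h0]
    exact hA.two_pow_mul_modEq j

theorem apply_two_pow_mul_odd_sub_one_modEq (hT : IsTribonacci T) {j : ℕ} (hj : 4 ≤ j) {m : ℤ}
    (hm : Odd m) : T (2 ^ (j + 1) * m - 1) ≡ 2 ^ (j + 2) [ZMOD 2 ^ (j + 3)] := by
  obtain ⟨A, B, U, -, hB, hm1, h0, -⟩ := hT.exists_apply_two_pow hj
  have h4 : ∀ i, 2 ≤ i → (4 : ℤ) ∣ 2 ^ i := fun i hi => by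
    simpa using pow_dvd_pow (2 : ℤ) hi
  obtain ⟨k, rfl⟩ := hm
  rw [show 2 ^ (j + 1) * (2 * k + 1) - 1 = 2 ^ (j + 1) - 1 + k * 2 ^ (j + 1 + 1) by ring]
  refine (hT.apply_add_mul_two_pow_modEq_of_four_dvd (by omega) ?_ ?_ k).trans ?_
  · rw [hm1]
    exact dvd_mul_of_dvd_left (h4 _ (by omega)) _
  · rw [sub_add_cancel, h0]
    exact dvd_mul_of_dvd_left (h4 _ (by omega)) _
  · rw [hm1]
    exact hB.two_pow_mul_modEq (j + 2)

theorem two_pow_dvd_apply_two_pow_mul_odd_sub_one (hT : IsTribonacci T) {j : ℕ} (hj : 3 ≤ j)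
    {m : ℤ} (hm : Odd m) : 2 ^ (j + 1) ∣ T (2 ^ (j + 1) * m - 1) := by
  obtain ⟨k, rfl⟩ := hm
  rw [show 2 ^ (j + 1) * (2 * k + 1) - 1 = 2 ^ (j + 1) - 1 + k * 2 ^ (j + 1 + 1) by ring]
  refine ((hT.apply_add_mul_two_pow_modEq (by omega) _ k).dvd_iff).2 ?_
  rcases (show j = 3 ∨ 4 ≤ j by omega) with rfl | hj
  · norm_num [hT.apply_ofNat]
    decide
  · obtain ⟨A, B, U, -, -, hm1, -, -⟩ := hT.exists_apply_two_pow hj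
    rw [hm1]
    exact dvd_mul_of_dvd_left (pow_dvd_pow 2 (by omega)) _

theorem padicValInt_apply_of_tribonacci_modEq (hT : IsTribonacci T) {n : ℤ} {k : ℕ}
    (hk : k ≤ 3) (h : tribonacci (n % 32).toNat ≡ 2 ^ k [MOD 2 ^ (k + 1)]) :
    padicValInt 2 (T n) = k := by
  apply padicValInt_two_eq_of_modEq
  have h16 : T n ≡ tribonacci (n % 32).toNat [ZMOD 2 ^ 4] := by
    have := hT.apply_add_mul_two_pow_modEq le_rfl (n % 32) (n / 32)
    rwa [show n % 32 + n / 32 * 2 ^ (4 + 1) = n by omega,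
      ← Int.toNat_of_nonneg (Int.emod_nonneg n (by norm_num)), hT.apply_natCast] at this
  refine (h16.of_dvd (pow_dvd_pow 2 (by omega))).trans ?_
  exact_mod_cast Int.natCast_modEq_iff.2 h

theorem padicValInt_apply_of_sixteen_dvd (hT : IsTribonacci T) {n : ℤ} (hn : n ≠ 0)
    (h : 16 ∣ n) : padicValInt 2 (T n) = padicValInt 2 n - 1 := by
  obtain ⟨j, m, hj, hm, hv, rfl⟩ :=
    Int.exists_two_pow_mul_odd_of_two_pow_dvd (k := 3) hn (by simpa using h)
  rw [hv, padicValInt_two_eq_of_modEq (hT.apply_two_pow_mul_odd_modEq hj hm), Nat.add_sub_cancel]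

theorem padicValInt_apply_of_sixteen_dvd_add_four (hT : IsTribonacci T) {n : ℤ} (hn : n + 4 ≠ 0)
    (h : 16 ∣ n + 4) : padicValInt 2 (T n) = padicValInt 2 (n + 4) - 1 := by
  obtain ⟨j, m, hj, hm, hv, hnm⟩ :=
    Int.exists_two_pow_mul_odd_of_two_pow_dvd (k := 3) hn (by simpa using h)
  have hid : T n = 2 * T (n + 3) - T (n + 4) := by
    refine congrFun (hT.recurrence.ext
      (((hT.recurrence.comp_add 3).const_mul 2).sub (hT.recurrence.comp_add 4)) ?_ ?_ ?_) n <;>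
    norm_num [hT.zero, hT.one, hT.two, hT.apply_ofNat] <;> decide
  rw [hv, Nat.add_sub_cancel, hid, show n + 3 = 2 ^ (j + 1) * m - 1 by linear_combination hnm,
    hnm]
  apply padicValInt_two_eq_of_modEq
  calc 2 * T (2 ^ (j + 1) * m - 1) - T (2 ^ (j + 1) * m) ≡ 0 - 2 ^ j [ZMOD 2 ^ (j + 1)] :=
        (Int.modEq_zero_iff_dvd.2
          ((hT.two_pow_dvd_apply_two_pow_mul_odd_sub_one hj hm).mul_left 2)).sub
            (hT.apply_two_pow_mul_odd_modEq hj hm)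
    _ ≡ 2 ^ j [ZMOD 2 ^ (j + 1)] := Int.modEq_iff_dvd.2 ⟨1, by ring⟩

theorem padicValInt_apply_of_thirtyTwo_dvd_add_seventeen (hT : IsTribonacci T) {n : ℤ}
    (hn : n + 17 ≠ 0) (h : 32 ∣ n + 17) : padicValInt 2 (T n) = padicValInt 2 (n + 17) + 1 := by
  obtain ⟨j, m, hj, hm, hv, hnm⟩ :=
    Int.exists_two_pow_mul_odd_of_two_pow_dvd (k := 4) hn (by simpa using h)
  have hid : T n = 56 * T (n + 17) - 103 * T (n + 16) := by
    refine congrFun (hT.recurrence.ext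
      (((hT.recurrence.comp_add 17).const_mul 56).sub ((hT.recurrence.comp_add 16).const_mul 103))
      ?_ ?_ ?_) n <;>
    norm_num [hT.zero, hT.one, hT.two, hT.apply_ofNat] <;> decide
  rw [hv, hid, show n + 16 = 2 ^ (j + 1) * m - 1 by linear_combination hnm, hnm]
  apply padicValInt_two_eq_of_modEq
  obtain ⟨c, hc⟩ := ((hT.apply_two_pow_mul_odd_modEq (by omega) hm).of_dvd
    (pow_dvd_pow 2 j.le_succ)).dvd_iff.2 dvd_rfl
  calc 56 * T (2 ^ (j + 1) * m) - 103 * T (2 ^ (j + 1) * m - 1)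
        ≡ 0 - 103 * 2 ^ (j + 2) [ZMOD 2 ^ (j + 3)] :=
        (Int.modEq_zero_iff_dvd.2 ⟨7 * c, by rw [hc]; ring⟩).sub
          ((hT.apply_two_pow_mul_odd_sub_one_modEq hj hm).mul_left 103)
    _ ≡ 2 ^ (j + 2) [ZMOD 2 ^ (j + 3)] := Int.modEq_iff_dvd.2 ⟨52, by ring⟩

theorem padicValInt_apply_of_thirtyTwo_dvd_add_one (hT : IsTribonacci T) {n : ℤ}
    (hn : n + 1 ≠ 0) (h : 32 ∣ n + 1) : padicValInt 2 (T n) = padicValInt 2 (n + 1) + 1 := by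
  obtain ⟨j, m, hj, hm, hv, hnm⟩ :=
    Int.exists_two_pow_mul_odd_of_two_pow_dvd (k := 4) hn (by simpa using h)
  rw [hv, show n = 2 ^ (j + 1) * m - 1 by linear_combination hnm,
    padicValInt_two_eq_of_modEq (hT.apply_two_pow_mul_odd_sub_one_modEq hj hm)]

end IsTribonacci

/-- **2-adic valuation of Tribonacci numbers** (Marques–Lengyel).
`T : ℤ → ℤ` is the Tribonacci sequence. For `n ≥ 1` the 2-adic valuation of `T n`
is given by the stated case distinction. -/
theorem tribonacci_padicValInt_two
    (T : ℤ → ℤ)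
    (hT0 : T 0 = 0) (hT1 : T 1 = 1) (hT2 : T 2 = 1)
    (hTrec : ∀ n : ℤ, T (n + 3) = T (n + 2) + T (n + 1) + T n) :
    ∀ n : ℤ, 1 ≤ n →
      ((n % 4 = 1 ∨ n % 4 = 2) → padicValInt 2 (T n) = 0) ∧
      ((n % 16 = 3 ∨ n % 16 = 11) → padicValInt 2 (T n) = 1) ∧
      ((n % 16 = 4 ∨ n % 16 = 8) → padicValInt 2 (T n) = 2) ∧
      (n % 16 = 7 → padicValInt 2 (T n) = 3) ∧
      (n % 16 = 0 → padicValInt 2 (T n) = padicValInt 2 n - 1) ∧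
      (n % 16 = 12 → padicValInt 2 (T n) = padicValInt 2 (n + 4) - 1) ∧
      (n % 32 = 15 → padicValInt 2 (T n) = padicValInt 2 (n + 17) + 1) ∧
      (n % 32 = 31 → padicValInt 2 (T n) = padicValInt 2 (n + 1) + 1) := by
  have hT : IsTribonacci T := ⟨hTrec, hT0, hT1, hT2⟩
  intro n hn
  have htab := tribonacci_modEq_two_pow_of_lt (n % 32).toNat (by omega)
  exact ⟨fun _ => hT.padicValInt_apply_of_tribonacci_modEq (by norm_num) (htab.1 (by omega)),
    fun _ => hT.padicValInt_apply_of_tribonacci_modEq (by norm_num) (htab.2.1 (by omega)),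
    fun _ => hT.padicValInt_apply_of_tribonacci_modEq (by norm_num) (htab.2.2.1 (by omega)),
    fun _ => hT.padicValInt_apply_of_tribonacci_modEq (by norm_num) (htab.2.2.2 (by omega)),
    fun _ => hT.padicValInt_apply_of_sixteen_dvd (by omega) (by omega),
    fun _ => hT.padicValInt_apply_of_sixteen_dvd_add_four (by omega) (by omega),
    fun _ => hT.padicValInt_apply_of_thirtyTwo_dvd_add_seventeen (by omega) (by omega),
    fun _ => hT.padicValInt_apply_of_thirtyTwo_dvd_add_one (by omega) (by omega)⟩
end

section
/- For every integer n ≥ 1 the 3-adic valuation of the Tribonacci number T(n) is given by: ν₃(T(n)) = 0 if n ≡ 1, 2, 3, 4, 5, 6, 8, 10, 11 (mod 13); ν₃(T(n)) = 1 if n ≡ 7 (mod 13); ν₃(T(n)) = ν₃(n) + 2 if n ≡ 0 (mod 13); ν₃(T(n)) = ν₃(n+1) + 2 if n ≡ 12 (mod 13); ν₃(T(n)) = 4 if n ≡ 9 (mod 39); ν₃(T(n)) = ν₃(n+17) + 4 if n ≡ 22 (mod 39); ν₃(T(n)) = ν₃(n+4) + 4 if n ≡ 35 (mod 39). -/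
/-!
Let `A` be the companion matrix of the recurrence, so that the vector `(T (n+2), T (n+1), T n)`
is multiplied by `A` when `n` increases by one. Then `A ^ 13 = 1 + 3 B₁₃` and
`A ^ 39 = 1 + 9 B₃₉`, and expanding `(1 + 3 ^ t B) ^ m` binomially writes `T (r + N m)` as
`∑ i, C(m, i) 3 ^ (t i) eᵢ` with `eᵢ` depending only on `r` and `i`. In the residue classes
with bounded valuation the term `i = 0` dominates. In the others `r ∈ {0, -1, -4, -17}` is a
zero of `T`, and the term `i = 1`, of valuation `ν₃(m) + t + ν₃(e₁)`, dominates, since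
`ν₃(C(m, i)) ≥ ν₃(m) - ν₃(i)` and `ν₃(i)` is small compared with `t i`.
-/

open Finset Matrix

def binomialSum {R : Type*} [CommRing R] (c : R) (e : ℕ → R) (m : ℕ) : R :=
  ∑ i ∈ range (m + 1), (m.choose i : R) * c ^ i * e i

theorem mulVec_one_add_smul_pow_apply {R n : Type*} [CommRing R] [Fintype n] [DecidableEq n]
    (Y : Matrix n n R) (c : R) (m : ℕ) (w : n → R) (j : n) :
    ((1 + c • Y) ^ m *ᵥ w) j = binomialSum c (fun i ↦ (Y ^ i *ᵥ w) j) m := by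
  rw [add_comm, (Commute.one_right (c • Y)).add_pow, sum_mulVec, Finset.sum_apply]
  refine sum_congr rfl fun i _ ↦ ?_
  simp only [one_pow, mul_one, smul_pow, ← mulVec_mulVec, natCast_mulVec, mulVec_smul,
    smul_mulVec, Pi.smul_apply, smul_eq_mul]
  ring

theorem padicValNat_lt_of_lt_pow {p i k : ℕ} (hi : i ≠ 0) (h : i < p ^ k) :
    padicValNat p i < k :=
  (padicValNat_le_nat_log i).trans_lt (Nat.log_lt_of_lt_pow hi h)

section padicVal

variable {p : ℕ} [Fact p.Prime]

theorem padicValInt_add_eq_left {x y : ℤ} (hx : x ≠ 0)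
    (hy : (p : ℤ) ^ (padicValInt p x + 1) ∣ y) : padicValInt p (x + y) = padicValInt p x := by
  have hx' : ¬ (p : ℤ) ^ (padicValInt p x + 1) ∣ x := by simp [padicValInt_dvd_iff, hx]
  have hxy : ¬ (p : ℤ) ^ (padicValInt p x + 1) ∣ x + y :=
    fun h ↦ hx' (by simpa using dvd_sub h hy)
  have hle : (p : ℤ) ^ padicValInt p x ∣ x + y :=
    dvd_add (padicValInt_dvd x) ((pow_dvd_pow _ (Nat.le_succ _)).trans hy)
  rw [padicValInt_dvd_iff] at hle hxy
  push Not at hxy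
  omega

theorem padicValInt_sum_eq_of_dvd {ι : Type*} [DecidableEq ι] {s : Finset ι} {f : ι → ℤ}
    {j : ι} (hj : j ∈ s) (hfj : f j ≠ 0)
    (h : ∀ i ∈ s, i ≠ j → (p : ℤ) ^ (padicValInt p (f j) + 1) ∣ f i) :
    padicValInt p (∑ i ∈ s, f i) = padicValInt p (f j) := by
  rw [← add_sum_erase s f hj]
  exact padicValInt_add_eq_left hfj
    (dvd_sum fun i hi ↦ h i (mem_of_mem_erase hi) (ne_of_mem_erase hi))

theorem padicValInt_pow_mul (w : ℕ) {u : ℤ} (hu : u ≠ 0) :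
    padicValInt p ((p : ℤ) ^ w * u) = w + padicValInt p u := by
  have hp : (p : ℤ) ≠ 0 := by exact_mod_cast (Fact.out : p.Prime).ne_zero
  rw [padicValInt.mul (pow_ne_zero _ hp) hu, ← Nat.cast_pow, padicValInt.of_nat,
    padicValNat.prime_pow]

theorem pow_padicValNat_dvd_pow_padicValNat_mul_choose (m : ℕ) {i : ℕ} (hi : i ≠ 0) :
    p ^ padicValNat p m ∣ p ^ padicValNat p i * m.choose i := by
  rcases Nat.eq_zero_or_pos (m.choose i) with h0 | hpos
  · simp [h0]
  have him : i ≤ m := by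
    by_contra! h
    simp [Nat.choose_eq_zero_of_lt h] at hpos
  obtain ⟨k, rfl⟩ := Nat.exists_eq_succ_of_ne_zero hi
  obtain ⟨l, rfl⟩ : ∃ l, m = l + 1 := ⟨m - 1, by omega⟩
  set c := (l + 1).choose (k + 1)
  have hval : padicValNat p (l + 1) ≤ padicValNat p (k + 1) + padicValNat p c := by
    rw [← padicValNat.mul (by omega) hpos.ne', mul_comm, ← Nat.add_one_mul_choose_eq,
      padicValNat.mul (by omega) (Nat.choose_pos (by omega)).ne']
    omega
  calc p ^ padicValNat p (l + 1) ∣ p ^ (padicValNat p (k + 1) + padicValNat p c) :=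
        pow_dvd_pow _ hval
    _ = _ := pow_add _ _ _
    _ ∣ _ := mul_dvd_mul_left _ pow_padicValNat_dvd

theorem padicValInt_binomialSum_eq_of_dvd {t w : ℕ} {e : ℕ → ℤ} {u : ℤ}
    (he0 : e 0 = p ^ w * u) (hu : ¬ (p : ℤ) ∣ u)
    (he : ∀ i, 1 ≤ i → t * i ≤ w → (p : ℤ) ^ (w + 1) ∣ ((p : ℤ) ^ t) ^ i * e i) (m : ℕ) :
    padicValInt p (binomialSum ((p : ℤ) ^ t) e m) = w := by
  have hu0 : u ≠ 0 := by rintro rfl; simp at hu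
  have hval : padicValInt p ((m.choose 0 : ℤ) * ((p : ℤ) ^ t) ^ 0 * e 0) = w := by
    simp [he0, padicValInt_pow_mul w hu0, padicValInt.eq_zero_of_not_dvd hu]
  rw [binomialSum, padicValInt_sum_eq_of_dvd (j := 0) (by simp)
    (by simp [he0, hu0, (Fact.out : p.Prime).ne_zero]), hval]
  intro i _ hi
  rw [hval, mul_assoc]
  refine dvd_mul_of_dvd_right ?_ _
  by_cases hti : t * i ≤ w
  · exact he i (by omega) hti
  · exact dvd_mul_of_dvd_left ((pow_dvd_pow _ (by omega)).trans (pow_mul _ _ _).dvd) _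

theorem padicValInt_binomialSum_eq_padicValNat_add {t v : ℕ} {e : ℕ → ℤ} {u : ℤ}
    (he0 : e 0 = 0) (he1 : e 1 = p ^ v * u) (hu : ¬ (p : ℤ) ∣ u)
    (he : ∀ i, 2 ≤ i → (p : ℤ) ^ (padicValNat p i + t + v + 1) ∣ ((p : ℤ) ^ t) ^ i * e i)
    {m : ℕ} (hm : m ≠ 0) :
    padicValInt p (binomialSum ((p : ℤ) ^ t) e m) = padicValNat p m + t + v := by
  have hu0 : u ≠ 0 := by rintro rfl; simp at hu
  have hp0 : (p : ℤ) ≠ 0 := by exact_mod_cast (Fact.out : p.Prime).ne_zero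
  have hm0 : (m : ℤ) ≠ 0 := by exact_mod_cast hm
  have hterm : (m.choose 1 : ℤ) * ((p : ℤ) ^ t) ^ 1 * e 1 = (p : ℤ) ^ (t + v) * (m * u) := by
    rw [he1, Nat.choose_one_right]; ring
  have hval : padicValInt p ((m.choose 1 : ℤ) * ((p : ℤ) ^ t) ^ 1 * e 1) =
      padicValNat p m + t + v := by
    rw [hterm, padicValInt_pow_mul _ (mul_ne_zero hm0 hu0), padicValInt.mul hm0 hu0,
      padicValInt.of_nat, padicValInt.eq_zero_of_not_dvd hu]
    ring
  rw [binomialSum, padicValInt_sum_eq_of_dvd (j := 1) (by simp; omega)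
    (by rw [hterm]; exact mul_ne_zero (pow_ne_zero _ hp0) (mul_ne_zero hm0 hu0)), hval]
  intro i _ hi
  rw [hval]
  rcases Nat.lt_or_ge i 2 with hi2 | hi2
  · obtain rfl : i = 0 := by omega
    simp [he0]
  have hchoose : (p : ℤ) ^ padicValNat p m ∣ (p : ℤ) ^ padicValNat p i * m.choose i := by
    exact_mod_cast pow_padicValNat_dvd_pow_padicValNat_mul_choose m (by omega)
  rw [← mul_dvd_mul_iff_left (pow_ne_zero (padicValNat p i) hp0)]
  calc (p : ℤ) ^ padicValNat p i * (p : ℤ) ^ (padicValNat p m + t + v + 1)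
      = (p : ℤ) ^ padicValNat p m * (p : ℤ) ^ (padicValNat p i + t + v + 1) := by ring
    _ ∣ ((p : ℤ) ^ padicValNat p i * m.choose i) * (((p : ℤ) ^ t) ^ i * e i) :=
        mul_dvd_mul hchoose (he i hi2)
    _ = _ := by ring

theorem pow_padicValNat_add_dvd {t v : ℕ} (hp : p ≠ 2) {e : ℕ → ℤ}
    (h2 : (p : ℤ) ^ (v + 1) ∣ (p : ℤ) ^ t * e 2)
    (h3 : (p : ℤ) ^ (v + 2) ∣ (p : ℤ) ^ (2 * t) * e 3) (hvt : v + 2 ≤ 3 * t) (i : ℕ) (hi : 2 ≤ i) :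
    (p : ℤ) ^ (padicValNat p i + t + v + 1) ∣ ((p : ℤ) ^ t) ^ i * e i := by
  have hp3 : 3 ≤ p := lt_of_le_of_ne (Fact.out : p.Prime).two_le (Ne.symm hp)
  rcases (show i = 2 ∨ i = 3 ∨ 4 ≤ i by omega) with rfl | rfl | hi4
  · have : padicValNat p 2 < 1 := padicValNat_lt_of_lt_pow two_ne_zero (by rw [pow_one]; omega)
    calc (p : ℤ) ^ (padicValNat p 2 + t + v + 1) = (p : ℤ) ^ t * (p : ℤ) ^ (v + 1) := by
          rw [← pow_add]; congr 1; omega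
      _ ∣ (p : ℤ) ^ t * ((p : ℤ) ^ t * e 2) := mul_dvd_mul_left _ h2
      _ = _ := by ring
  · have : padicValNat p 3 < 2 := padicValNat_lt_of_lt_pow three_ne_zero (by nlinarith)
    calc (p : ℤ) ^ (padicValNat p 3 + t + v + 1) ∣ (p : ℤ) ^ t * (p : ℤ) ^ (v + 2) := by
          rw [← pow_add]; exact pow_dvd_pow _ (by omega)
      _ ∣ (p : ℤ) ^ t * ((p : ℤ) ^ (2 * t) * e 3) := mul_dvd_mul_left _ h3
      _ = _ := by ring
  · obtain ⟨k, rfl⟩ : ∃ k, i = k + 4 := ⟨i - 4, by omega⟩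
    have hlt : k + 4 < 3 ^ (k + 2) := by
      have := Nat.lt_pow_self (n := k) (by norm_num : 1 < 3)
      rw [pow_add]
      omega
    have hval : padicValNat p (k + 4) < k + 2 :=
      padicValNat_lt_of_lt_pow (by omega) (hlt.trans_le (Nat.pow_le_pow_left hp3 _))
    have hti : padicValNat p (k + 4) + t + v + 1 ≤ t * (k + 4) := by
      nlinarith [Nat.le_mul_of_pos_left k (show 0 < t by omega)]
    calc (p : ℤ) ^ (padicValNat p (k + 4) + t + v + 1) ∣ ((p : ℤ) ^ t) ^ (k + 4) := by
          rw [← pow_mul]; exact pow_dvd_pow _ hti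
      _ ∣ _ := dvd_mul_right _ _

end padicVal

theorem padicValInt_three_thirteen_mul {m : ℕ} (hm : m ≠ 0) :
    padicValInt 3 ↑(13 * m) = padicValNat 3 m := by
  rw [padicValInt.of_nat, padicValNat.mul (by norm_num) hm,
    padicValNat.eq_zero_of_not_dvd (by norm_num), zero_add]

theorem padicValInt_three_thirtyNine_mul {m : ℕ} (hm : m ≠ 0) :
    padicValInt 3 ↑(39 * m) = padicValNat 3 m + 1 := by
  rw [show 39 * m = 3 * (13 * m) by ring, padicValInt.of_nat, padicValNat.mul (by norm_num)
    (by omega), padicValNat_self, ← padicValInt.of_nat, padicValInt_three_thirteen_mul hm, add_comm]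

namespace Tribonacci

def companion : Matrix (Fin 3) (Fin 3) ℤ := !![1, 1, 1; 1, 0, 0; 0, 1, 0]

def companionInv : Matrix (Fin 3) (Fin 3) ℤ := !![0, 1, 0; 0, 0, 1; 1, -1, -1]

def B₁₃ : Matrix (Fin 3) (Fin 3) ℤ := !![568, 477, 309; 309, 259, 168; 168, 141, 91]

def B₃₉ : Matrix (Fin 3) (Fin 3) ℤ := B₁₃ + 3 • B₁₃ ^ 2 + 3 • B₁₃ ^ 3

theorem companion_pow_thirteen : companion ^ 13 = 1 + (3 : ℤ) • B₁₃ := by decide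

theorem companion_pow_thirtyNine : companion ^ 39 = 1 + (3 : ℤ) ^ 2 • B₃₉ := by
  rw [show 39 = 13 * 3 from rfl, pow_mul, companion_pow_thirteen]
  decide

def state (T : ℤ → ℤ) (n : ℤ) : Fin 3 → ℤ := ![T (n + 2), T (n + 1), T n]

end Tribonacci

open Tribonacci

structure IsTribonacci_s1 (T : ℤ → ℤ) : Prop where
  zero : T 0 = 0
  one : T 1 = 1
  two : T 2 = 1
  add_three (n : ℤ) : T (n + 3) = T (n + 2) + T (n + 1) + T n

namespace IsTribonacci_s1

variable {T : ℤ → ℤ}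

theorem state_add_one (hT : IsTribonacci_s1 T) (n : ℤ) :
    state T (n + 1) = companion *ᵥ state T n := by
  ext i
  fin_cases i <;> simp [state, companion, mulVec, dotProduct, Fin.sum_univ_three, hT.add_three,
    add_assoc]

theorem state_sub_one (hT : IsTribonacci_s1 T) (n : ℤ) :
    state T (n - 1) = companionInv *ᵥ state T n := by
  have h : T (n - 1) = T (n + 2) - T (n + 1) - T n := by
    rw [show n + 2 = n - 1 + 3 by ring, hT.add_three]; ring_nf
  ext i
  fin_cases i <;> simp [state, companionInv, mulVec, dotProduct, Fin.sum_univ_three, h] <;> ring_nf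

theorem state_add (hT : IsTribonacci_s1 T) (n : ℤ) (k : ℕ) :
    state T (n + k) = companion ^ k *ᵥ state T n := by
  induction k with
  | zero => simp
  | succ k ih => rw [Nat.cast_succ, ← add_assoc, hT.state_add_one, ih, mulVec_mulVec, pow_succ']

theorem state_sub (hT : IsTribonacci_s1 T) (n : ℤ) (k : ℕ) :
    state T (n - k) = companionInv ^ k *ᵥ state T n := by
  induction k with
  | zero => simp
  | succ k ih => rw [Nat.cast_succ, ← sub_sub, hT.state_sub_one, ih, mulVec_mulVec, pow_succ']

theorem state_zero (hT : IsTribonacci_s1 T) : state T 0 = ![1, 1, 0] := by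
  simp [state, hT.zero, hT.one, hT.two]

theorem state_natCast (hT : IsTribonacci_s1 T) (k : ℕ) :
    state T k = companion ^ k *ᵥ ![1, 1, 0] := by
  rw [← hT.state_zero, ← hT.state_add, zero_add]

theorem state_neg_natCast (hT : IsTribonacci_s1 T) (k : ℕ) :
    state T (-k) = companionInv ^ k *ᵥ ![1, 1, 0] := by
  rw [← hT.state_zero, ← hT.state_sub, zero_sub]

theorem apply_add_mul (hT : IsTribonacci_s1 T) {N : ℕ} {c : ℤ} {Y : Matrix (Fin 3) (Fin 3) ℤ}
    (hN : companion ^ N = 1 + c • Y) (r : ℤ) (m : ℕ) :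
    T (r + ↑(N * m)) = binomialSum c (fun i ↦ (Y ^ i *ᵥ state T r) 2) m := by
  rw [← mulVec_one_add_smul_pow_apply, ← hN, ← pow_mul, ← hT.state_add]
  rfl

theorem padicValInt_apply_add_mul_eq_padicValNat_add (hT : IsTribonacci_s1 T) {p N t v : ℕ}
    [Fact p.Prime] (hp : p ≠ 2) {Y : Matrix (Fin 3) (Fin 3) ℤ}
    (hN : companion ^ N = 1 + ((p : ℤ) ^ t) • Y) {r : ℤ} {x : Fin 3 → ℤ} (hx : state T r = x)
    (hx2 : x 2 = 0) {u : ℤ} (h1 : (Y *ᵥ x) 2 = p ^ v * u) (hu : ¬ (p : ℤ) ∣ u)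
    (h2 : (p : ℤ) ^ (v + 1) ∣ (p : ℤ) ^ t * (Y ^ 2 *ᵥ x) 2)
    (h3 : (p : ℤ) ^ (v + 2) ∣ (p : ℤ) ^ (2 * t) * (Y ^ 3 *ᵥ x) 2) (hvt : v + 2 ≤ 3 * t)
    {m : ℕ} (hm : m ≠ 0) :
    padicValInt p (T (r + ↑(N * m))) = padicValNat p m + t + v := by
  rw [hT.apply_add_mul hN, hx]
  exact padicValInt_binomialSum_eq_padicValNat_add (by simpa using hx2) (by simpa using h1) hu
    (pow_padicValNat_add_dvd hp h2 h3 hvt) hm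

theorem padicValInt_three_eq_zero (hT : IsTribonacci_s1 T) {n : ℤ} (hn : 0 ≤ n)
    (h : n % 13 = 1 ∨ n % 13 = 2 ∨ n % 13 = 3 ∨ n % 13 = 4 ∨ n % 13 = 5 ∨ n % 13 = 6 ∨
      n % 13 = 8 ∨ n % 13 = 10 ∨ n % 13 = 11) :
    padicValInt 3 (T n) = 0 := by
  obtain ⟨k, hk⟩ : ∃ k : ℕ, n % 13 = k := ⟨(n % 13).toNat, by omega⟩
  have hTk : ¬ (3 : ℤ) ∣ T k := by
    have hmem : k ∈ ({1, 2, 3, 4, 5, 6, 8, 10, 11} : Finset ℕ) := by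
      simp only [mem_insert, mem_singleton]
      omega
    rw [show T k = (companion ^ k *ᵥ ![1, 1, 0]) 2 from congrFun (hT.state_natCast k) 2]
    clear hk
    revert k
    decide
  obtain ⟨m, rfl⟩ : ∃ m : ℕ, n = k + ↑(13 * m) := ⟨(n / 13).toNat, by omega⟩
  rw [hT.apply_add_mul companion_pow_thirteen]
  exact padicValInt_binomialSum_eq_of_dvd (p := 3) (t := 1) (w := 0) (u := T k)
    (by simp [state]) hTk (fun i hi hti ↦ by omega) m

theorem padicValInt_three_of_emod_thirteen_eq_seven (hT : IsTribonacci_s1 T) {n : ℤ} (hn : 0 ≤ n)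
    (h : n % 13 = 7) : padicValInt 3 (T n) = 1 := by
  obtain ⟨m, rfl⟩ : ∃ m : ℕ, n = ((7 : ℕ) : ℤ) + ↑(13 * m) := ⟨(n / 13).toNat, by omega⟩
  rw [hT.apply_add_mul companion_pow_thirteen, hT.state_natCast]
  refine padicValInt_binomialSum_eq_of_dvd (p := 3) (t := 1) (w := 1) (u := 8) (by decide)
    (by decide) (fun i hi hti ↦ ?_) m
  obtain rfl : i = 1 := by omega
  decide

theorem padicValInt_three_of_emod_thirtyNine_eq_nine (hT : IsTribonacci_s1 T) {n : ℤ}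
    (hn : 0 ≤ n) (h : n % 39 = 9) : padicValInt 3 (T n) = 4 := by
  obtain ⟨m, rfl⟩ : ∃ m : ℕ, n = ((9 : ℕ) : ℤ) + ↑(39 * m) := ⟨(n / 39).toNat, by omega⟩
  rw [hT.apply_add_mul companion_pow_thirtyNine, hT.state_natCast]
  refine padicValInt_binomialSum_eq_of_dvd (p := 3) (t := 2) (w := 4) (u := 1) (by decide)
    (by decide) (fun i hi hti ↦ ?_) m
  obtain rfl | rfl : i = 1 ∨ i = 2 := by omega
  all_goals decide

theorem padicValInt_three_of_emod_thirteen_eq_zero (hT : IsTribonacci_s1 T) {n : ℤ} (hn : 1 ≤ n)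
    (h : n % 13 = 0) : padicValInt 3 (T n) = padicValInt 3 n + 2 := by
  obtain ⟨m, hm, rfl⟩ : ∃ m : ℕ, m ≠ 0 ∧ n = 0 + ↑(13 * m) :=
    ⟨(n / 13).toNat, by omega, by omega⟩
  rw [hT.padicValInt_apply_add_mul_eq_padicValNat_add (p := 3) (t := 1) (v := 1) (u := 103)
    (by decide) companion_pow_thirteen hT.state_zero (by decide) (by decide) (by decide)
    (by decide) (by decide) (by decide) hm, zero_add, padicValInt_three_thirteen_mul hm]

theorem padicValInt_three_of_emod_thirteen_eq_twelve (hT : IsTribonacci_s1 T) {n : ℤ}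
    (hn : 1 ≤ n) (h : n % 13 = 12) : padicValInt 3 (T n) = padicValInt 3 (n + 1) + 2 := by
  obtain ⟨m, hm, rfl⟩ : ∃ m : ℕ, m ≠ 0 ∧ n = -((1 : ℕ) : ℤ) + ↑(13 * m) :=
    ⟨((n + 1) / 13).toNat, by omega, by omega⟩
  rw [hT.padicValInt_apply_add_mul_eq_padicValNat_add (p := 3) (t := 1) (v := 1) (u := 56)
    (by decide) companion_pow_thirteen (hT.state_neg_natCast 1) (by decide) (by decide)
    (by decide) (by decide) (by decide) (by decide) hm,
    show -((1 : ℕ) : ℤ) + ↑(13 * m) + 1 = ↑(13 * m) by omega, padicValInt_three_thirteen_mul hm]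

theorem padicValInt_three_of_emod_thirtyNine_eq_twentyTwo (hT : IsTribonacci_s1 T) {n : ℤ}
    (hn : 1 ≤ n) (h : n % 39 = 22) : padicValInt 3 (T n) = padicValInt 3 (n + 17) + 4 := by
  obtain ⟨m, hm, rfl⟩ : ∃ m : ℕ, m ≠ 0 ∧ n = -((17 : ℕ) : ℤ) + ↑(39 * m) :=
    ⟨((n + 17) / 39).toNat, by omega, by omega⟩
  rw [hT.padicValInt_apply_add_mul_eq_padicValNat_add (p := 3) (t := 2) (v := 3) (u := 919)
    (by decide) companion_pow_thirtyNine (hT.state_neg_natCast 17) (by decide) (by decide)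
    (by decide) (by decide) (by decide) (by decide) hm,
    show -((17 : ℕ) : ℤ) + ↑(39 * m) + 17 = ↑(39 * m) by omega,
    padicValInt_three_thirtyNine_mul hm]

theorem padicValInt_three_of_emod_thirtyNine_eq_thirtyFive (hT : IsTribonacci_s1 T) {n : ℤ}
    (hn : 1 ≤ n) (h : n % 39 = 35) : padicValInt 3 (T n) = padicValInt 3 (n + 4) + 4 := by
  obtain ⟨m, hm, rfl⟩ : ∃ m : ℕ, m ≠ 0 ∧ n = -((4 : ℕ) : ℤ) + ↑(39 * m) :=
    ⟨((n + 4) / 39).toNat, by omega, by omega⟩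
  rw [hT.padicValInt_apply_add_mul_eq_padicValNat_add (p := 3) (t := 2) (v := 3) (u := 2533718)
    (by decide) companion_pow_thirtyNine (hT.state_neg_natCast 4) (by decide) (by decide)
    (by decide) (by decide) (by decide) (by decide) hm,
    show -((4 : ℕ) : ℤ) + ↑(39 * m) + 4 = ↑(39 * m) by omega, padicValInt_three_thirtyNine_mul hm]

end IsTribonacci_s1

/-- **3-adic valuation of Tribonacci numbers.**
`T : ℤ → ℤ` is the Tribonacci sequence. For `n ≥ 1` the 3-adic valuation of `T n`
is given by the stated case distinction. -/
theorem tribonacci_padicValInt_three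
    (T : ℤ → ℤ)
    (hT0 : T 0 = 0) (hT1 : T 1 = 1) (hT2 : T 2 = 1)
    (hTrec : ∀ n : ℤ, T (n + 3) = T (n + 2) + T (n + 1) + T n) :
    ∀ n : ℤ, 1 ≤ n →
      ((n % 13 = 1 ∨ n % 13 = 2 ∨ n % 13 = 3 ∨ n % 13 = 4 ∨ n % 13 = 5 ∨ n % 13 = 6 ∨
        n % 13 = 8 ∨ n % 13 = 10 ∨ n % 13 = 11) → padicValInt 3 (T n) = 0) ∧
      (n % 13 = 7 → padicValInt 3 (T n) = 1) ∧
      (n % 13 = 0 → padicValInt 3 (T n) = padicValInt 3 n + 2) ∧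
      (n % 13 = 12 → padicValInt 3 (T n) = padicValInt 3 (n + 1) + 2) ∧
      (n % 39 = 9 → padicValInt 3 (T n) = 4) ∧
      (n % 39 = 22 → padicValInt 3 (T n) = padicValInt 3 (n + 17) + 4) ∧
      (n % 39 = 35 → padicValInt 3 (T n) = padicValInt 3 (n + 4) + 4) := by
  intro n hn
  have hT : IsTribonacci_s1 T := ⟨hT0, hT1, hT2, hTrec⟩
  have hn₀ : 0 ≤ n := by omega
  exact ⟨hT.padicValInt_three_eq_zero hn₀, hT.padicValInt_three_of_emod_thirteen_eq_seven hn₀,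
    hT.padicValInt_three_of_emod_thirteen_eq_zero hn,
    hT.padicValInt_three_of_emod_thirteen_eq_twelve hn,
    hT.padicValInt_three_of_emod_thirtyNine_eq_nine hn₀,
    hT.padicValInt_three_of_emod_thirtyNine_eq_twentyTwo hn,
    hT.padicValInt_three_of_emod_thirtyNine_eq_thirtyFive hn⟩
end

section
/- Let p be a prime with p ∉ {2, 11}, p ≡ 2 (mod 3), and suppose that the polynomial X³ − X² − X − 1 splits into linear factors over ℚ_p. Then: (1) for every integer n with 3n ≡ 1 (mod p−1) and every natural number k, if p^k divides 3n − 1 then p^k divides T(n); and (2) for every integer n with 3n ≡ −5 (mod p−1) and every natural number k, if p^k divides 3n + 5 then p^k divides T(n). -/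
/-!
The roots `α, β, γ` of `X³ - X² - X - 1` are units of `ℤ_p`, and
`T n · V = Σ α ^ (n + 1) (γ - β)` with `V = (α - β)(β - γ)(γ - α)`, `V² = -44`.
Modulo `p ^ (k + 1)` every unit `u` satisfies `u ^ ((p - 1) p ^ k) = 1`, so if
`(p - 1) p ^ k ∣ 3m - 1` then `a = α ^ m, b = β ^ m, c = γ ^ m` are cube roots of `α, β, γ`
with `abc = 1`. Their elementary symmetric functions `s, q` satisfy
`(sq - 2)((sq)² - 7sq + 4) = 0`; the second factor is a unit because its discriminant
`33 = -3 · (-44) / 22²` is not a square mod `p` (`-3` is not, as `p ≡ 2 mod 3`).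
Hence `q³ = 2` and `s = q²`, and the Binet sums for `T m` and `T (m - 2)`, which are the
Vandermonde `V(a, b, c)` times the Schur polynomials `s₍₂,₂₎` and `s₍₃,₁₎`, vanish
modulo `p ^ (k + 1)`.
-/

open Polynomial

theorem eq_of_tribonacci_recurrence {M : Type*} [AddCommGroup M] {f g : ℤ → M}
    (hf : ∀ n, f (n + 3) = f (n + 2) + f (n + 1) + f n)
    (hg : ∀ n, g (n + 3) = g (n + 2) + g (n + 1) + g n)
    (h0 : f 0 = g 0) (h1 : f 1 = g 1) (h2 : f 2 = g 2) : f = g := by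
  have key (n : ℤ) : f n = g n ∧ f (n + 1) = g (n + 1) ∧ f (n + 2) = g (n + 2) := by
    induction n using Int.induction_on with
    | zero => simpa using ⟨h0, h1, h2⟩
    | succ i ih =>
      obtain ⟨e0, e1, e2⟩ := ih
      refine ⟨e1, by rwa [add_assoc, one_add_one_eq_two], ?_⟩
      rw [add_assoc, show (1 : ℤ) + 2 = 3 by norm_num, hf, hg, e0, e1, e2]
    | pred i ih =>
      obtain ⟨e0, e1, e2⟩ := ih
      have hf' := hf (-i - 1)
      have hg' := hg (-i - 1)
      simp only [sub_add_cancel, show -(i : ℤ) - 1 + 2 = -i + 1 by ring,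
        show -(i : ℤ) - 1 + 3 = -i + 2 by ring] at hf' hg' ⊢
      rw [e2, e1, e0] at hf'
      exact ⟨add_left_cancel (hf'.symm.trans hg'), e0, e1⟩
  exact funext fun n ↦ (key n).1

namespace Units

variable {R : Type*} [CommRing R]

theorem val_zpow_add_natCast (u : Rˣ) (n : ℤ) (j : ℕ) :
    ((u ^ (n + j) : Rˣ) : R) = (u ^ n : Rˣ) * (u : R) ^ j := by
  rw [zpow_add, zpow_natCast, Units.val_mul, Units.val_pow_eq_pow_val]

theorem val_zpow_add_three {u : Rˣ} (hu : (u : R) ^ 3 = u ^ 2 + u + 1) (n : ℤ) :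
    ((u ^ (n + 3) : Rˣ) : R) = (u ^ (n + 2) : Rˣ) + (u ^ (n + 1) : Rˣ) + (u ^ n : Rˣ) := by
  have h3 := val_zpow_add_natCast u n 3
  have h2 := val_zpow_add_natCast u n 2
  have h1 := val_zpow_add_natCast u n 1
  push_cast at h1 h2 h3
  rw [h1, h2, h3]
  linear_combination (u ^ n : Rˣ) * hu

variable {u : Rˣ} {m : ℤ}

theorem val_zpow_pow_three (hu : u ^ (3 * m - 1) = 1) : ((u ^ m : Rˣ) : R) ^ 3 = u := by
  rw [← Units.val_pow_eq_pow_val, ← zpow_natCast, ← zpow_mul,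
    show m * ((3 : ℕ) : ℤ) = 3 * m - 1 + 1 by push_cast; ring, zpow_add_one, hu, one_mul]

theorem val_zpow_sub_two_mul (hu : u ^ (3 * m - 1) = 1) {y z : R}
    (h : ((u ^ m : Rˣ) : R) * y * z = 1) : ((u ^ (m - 2) : Rˣ) : R) * u = (y * z) ^ 2 := by
  have hinv : ((u ^ (m - 2) : Rˣ) : R) * u * ((u ^ m : Rˣ) : R) ^ 2 = 1 := by
    rw [← Units.val_pow_eq_pow_val, ← Units.val_mul, ← Units.val_mul, ← zpow_add_one,
      ← zpow_natCast, ← zpow_mul, ← zpow_add,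
      show m - 2 + 1 + m * ((2 : ℕ) : ℤ) = 3 * m - 1 by push_cast; ring, hu, Units.val_one]
  linear_combination (y * z) ^ 2 * hinv
    - ((u ^ (m - 2) : Rˣ) : R) * u * (((u ^ m : Rˣ) : R) * y * z + 1) * h

end Units

/-- The roots of `X³ - X² - X - 1` in `R`, given through Vieta's formulas so that they can be
transported along ring homomorphisms to rings that are not domains, such as `ZMod (p ^ k)`. -/
structure TribonacciRoots (R : Type*) [CommRing R] where
  α : Rˣ
  β : Rˣ
  γ : Rˣ
  add_add_eq_one : (α + β + γ : R) = 1
  mul_add_mul_add_mul_eq_neg_one : (α * β + β * γ + γ * α : R) = -1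
  mul_mul_eq_one : (α * β * γ : R) = 1

namespace TribonacciRoots

variable {R S : Type*} [CommRing R] [CommRing S] (r : TribonacciRoots R)

def vandermonde : R := (r.α - r.β) * (r.β - r.γ) * (r.γ - r.α)

def map (f : R →+* S) : TribonacciRoots S where
  α := Units.map f r.α
  β := Units.map f r.β
  γ := Units.map f r.γ
  add_add_eq_one := by simpa using congrArg f r.add_add_eq_one
  mul_add_mul_add_mul_eq_neg_one := by simpa using congrArg f r.mul_add_mul_add_mul_eq_neg_one
  mul_mul_eq_one := by simpa using congrArg f r.mul_mul_eq_one

theorem vandermonde_sq : r.vandermonde ^ 2 = -44 := by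
  have h1 := r.add_add_eq_one
  have h2 := r.mul_add_mul_add_mul_eq_neg_one
  have h3 := r.mul_mul_eq_one
  set a : R := ↑r.α
  set b : R := ↑r.β
  set c : R := ↑r.γ
  set e1 := a + b + c
  set e2 := a * b + b * c + c * a
  set e3 := a * b * c
  unfold vandermonde
  linear_combination
      (e2 ^ 2 * (e1 + 1) - 4 * e3 * (e1 ^ 2 + e1 + 1) + 18 * e2 * e3) * h1
      + ((e2 - 1) - 4 * (e2 ^ 2 - e2 + 1) + 18 * e3) * h2
      + (-(27 * e3 + 49)) * h3

theorem sub_mul_sub_mul_sub (x : R) :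
    (x - r.α) * (x - r.β) * (x - r.γ) = x ^ 3 - x ^ 2 - x - 1 := by
  linear_combination (-x ^ 2) * r.add_add_eq_one + x * r.mul_add_mul_add_mul_eq_neg_one
    - r.mul_mul_eq_one

theorem intCast_mul_vandermonde {T : ℤ → ℤ} (hT0 : T 0 = 0) (hT1 : T 1 = 1) (hT2 : T 2 = 1)
    (hT : ∀ n, T (n + 3) = T (n + 2) + T (n + 1) + T n) (n : ℤ) :
    (T n : R) * r.vandermonde = (r.α ^ n : Rˣ) * r.α * (r.γ - r.β)
      + (r.β ^ n : Rˣ) * r.β * (r.α - r.γ) + (r.γ ^ n : Rˣ) * r.γ * (r.β - r.α) := by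
  have root (x : Rˣ) (hx : (x - r.α) * (x - r.β) * (x - r.γ) = (0 : R)) :
      (x : R) ^ 3 = x ^ 2 + x + 1 := by
    linear_combination hx - r.sub_mul_sub_mul_sub x
  have hα := Units.val_zpow_add_three (root r.α (by ring))
  have hβ := Units.val_zpow_add_three (root r.β (by ring))
  have hγ := Units.val_zpow_add_three (root r.γ (by ring))
  refine congrFun (eq_of_tribonacci_recurrence (f := fun n ↦ (T n : R) * r.vandermonde)
    (g := fun n ↦ (r.α ^ n : Rˣ) * r.α * (r.γ - r.β)
      + (r.β ^ n : Rˣ) * r.β * (r.α - r.γ) + (r.γ ^ n : Rˣ) * r.γ * (r.β - r.α))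
    ?_ ?_ ?_ ?_ ?_) n
  · intro n
    simp only [hT, Int.cast_add]
    ring
  · intro n
    simp only [hα, hβ, hγ]
    ring
  · simp only [hT0, Int.cast_zero, zero_mul, zpow_ofNat, pow_zero, Units.val_one, one_mul]
    ring
  · simp only [hT1, Int.cast_one, vandermonde, one_mul, zpow_ofNat, pow_one]
    ring
  · simp only [hT2, Int.cast_one, vandermonde, one_mul, zpow_ofNat, Units.val_pow_eq_pow_val]
    linear_combination (-(r.α - r.β) * (r.β - r.γ) * (r.γ - r.α) : R) * r.add_add_eq_one

end TribonacciRoots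

theorem add_eq_sq_and_pow_three_eq_two_of_cubes {R : Type*} [CommRing R] {a b c : R}
    (h1 : a ^ 3 + b ^ 3 + c ^ 3 = 1) (h2 : a ^ 3 * b ^ 3 + b ^ 3 * c ^ 3 + c ^ 3 * a ^ 3 = -1)
    (h3 : a * b * c = 1) (two : IsUnit (2 : R)) (hQ : ∀ x : R, IsUnit (x ^ 2 - 7 * x + 4)) :
    a + b + c = (a * b + b * c + c * a) ^ 2 ∧ (a * b + b * c + c * a) ^ 3 = 2 := by
  obtain ⟨s, hs⟩ : ∃ s, s = a + b + c := ⟨_, rfl⟩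
  obtain ⟨q, hq⟩ : ∃ q, q = a * b + b * c + c * a := ⟨_, rfl⟩
  rw [← hs, ← hq]
  have hs3 : s ^ 3 = 3 * (s * q) - 2 := by
    rw [hs, hq]
    linear_combination h1 - 3 * h3
  have hq3 : q ^ 3 = 3 * (s * q) - 4 := by
    rw [hs, hq]
    linear_combination h2 + (3 * (a + b + c) * (a * b + b * c + c * a) - 3 * (a * b * c) - 3) * h3
  have hsq : s * q = 2 := by
    have h : (s * q - 2) * ((s * q) ^ 2 - 7 * (s * q) + 4) = 0 := by
      linear_combination q ^ 3 * hs3 + (3 * (s * q) - 2) * hq3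
    exact sub_eq_zero.1 ((hQ _).mul_left_eq_zero.1 h)
  have hq2 : q ^ 3 = 2 := by linear_combination hq3 + 3 * hsq
  have hq_unit : IsUnit q := (isUnit_pow_iff three_ne_zero).1 (hq2 ▸ two)
  refine ⟨sub_eq_zero.1 (hq_unit.mul_left_eq_zero.1 ?_), hq2⟩
  linear_combination hsq - hq2

namespace TribonacciRoots

variable {R : Type*} [CommRing R] (r : TribonacciRoots R)

theorem intCast_tribonacci_eq_zero {T : ℤ → ℤ} (hT0 : T 0 = 0) (hT1 : T 1 = 1) (hT2 : T 2 = 1)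
    (hT : ∀ n, T (n + 3) = T (n + 2) + T (n + 1) + T n) (two : IsUnit (2 : R))
    (hV : IsUnit r.vandermonde) (hQ : ∀ x : R, IsUnit (x ^ 2 - 7 * x + 4)) {m : ℤ}
    (hm : ∀ u : Rˣ, u ^ (3 * m - 1) = 1) : (T m : R) = 0 ∧ (T (m - 2) : R) = 0 := by
  have cube (u : Rˣ) : ((u ^ m : Rˣ) : R) ^ 3 = u := Units.val_zpow_pow_three (hm u)
  have hαβγ : r.α * r.β * r.γ = 1 := Units.ext (by push_cast; exact r.mul_mul_eq_one)
  set a : R := ↑(r.α ^ m)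
  set b : R := ↑(r.β ^ m)
  set c : R := ↑(r.γ ^ m)
  have habc : a * b * c = 1 := by
    simp only [a, b, c, ← Units.val_mul, ← mul_zpow, hαβγ, one_zpow, Units.val_one]
  obtain ⟨hs, hq⟩ := add_eq_sq_and_pow_three_eq_two_of_cubes
    (by rw [cube, cube, cube]; exact r.add_add_eq_one)
    (by rw [cube, cube, cube]; exact r.mul_add_mul_add_mul_eq_neg_one) habc two hQ
  constructor
  · rw [← hV.mul_left_eq_zero]
    calc (T m : R) * r.vandermonde
        = a * a ^ 3 * (c ^ 3 - b ^ 3) + b * b ^ 3 * (a ^ 3 - c ^ 3)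
          + c * c ^ 3 * (b ^ 3 - a ^ 3) := by
          rw [r.intCast_mul_vandermonde hT0 hT1 hT2 hT, cube, cube, cube]
      _ = (a - b) * (b - c) * (c - a)
          * ((a * b + b * c + c * a) ^ 2 - (a + b + c) * (a * b * c)) := by ring
      _ = 0 := by rw [habc, hs]; ring
  · rw [← hV.mul_left_eq_zero]
    calc (T (m - 2) : R) * r.vandermonde
        = (b * c) ^ 2 * (c ^ 3 - b ^ 3) + (c * a) ^ 2 * (a ^ 3 - c ^ 3)
          + (a * b) ^ 2 * (b ^ 3 - a ^ 3) := by
          rw [r.intCast_mul_vandermonde hT0 hT1 hT2 hT, Units.val_zpow_sub_two_mul (hm r.α) habc,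
            Units.val_zpow_sub_two_mul (hm r.β) (y := c) (z := a) (by linear_combination habc),
            Units.val_zpow_sub_two_mul (hm r.γ) (y := a) (z := b) (by linear_combination habc),
            cube, cube, cube]
      _ = (a - b) * (b - c) * (c - a) * ((a + b + c) ^ 2 * (a * b + b * c + c * a)
          - (a * b + b * c + c * a) ^ 2 - (a + b + c) * (a * b * c)) := by ring
      _ = 0 := by
        rw [habc, hs]
        linear_combination (a - b) * (b - c) * (c - a) * (a * b + b * c + c * a) ^ 2 * hq

theorem nonempty_of_splits (R : Type*) {K : Type*} [CommRing R] [IsDomain R]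
    [IsIntegrallyClosed R] [Field K] [Algebra R K] [IsFractionRing R K]
    (h : (X ^ 3 - X ^ 2 - X - 1 : K[X]).Splits) : Nonempty (TribonacciRoots R) := by
  let P : Cubic K := ⟨1, -1, -1, -1⟩
  have hP : P.toPoly.map (RingHom.id K) = X ^ 3 - X ^ 2 - X - 1 := by
    simp only [Cubic.toPoly, P, map_one, one_mul, map_neg, neg_mul, Polynomial.map_add,
      Polynomial.map_pow, map_X, Polynomial.map_neg, Polynomial.map_one]
    ring
  obtain ⟨x, y, z, hroots⟩ := (Cubic.splits_iff_roots_eq_three one_ne_zero).1 (hP ▸ h)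
  have hvieta := Cubic.eq_sum_three_roots one_ne_zero hroots
  simp only [Cubic.map, Cubic.mk.injEq, P, RingHom.id_apply] at hvieta
  obtain ⟨-, h1, h2, h3⟩ := hvieta
  have lift (w : K) (hw : (w - x) * (w - y) * (w - z) = 0) : ∃ v : R, algebraMap R K v = w := by
    refine IsIntegrallyClosed.isIntegral_iff.1 ⟨X ^ 3 - X ^ 2 - X - 1, by monicity!, ?_⟩
    simp only [eval₂_sub, eval₂_X_pow, eval₂_X, eval₂_one]
    linear_combination hw + w ^ 2 * h1 + w * h2 + h3
  obtain ⟨a, rfl⟩ := lift x (by ring)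
  obtain ⟨b, rfl⟩ := lift y (by ring)
  obtain ⟨c, rfl⟩ := lift z (by ring)
  have inj := IsFractionRing.injective R K
  have habc : a * (b * c) = 1 := inj (by simp only [map_mul, map_one]; linear_combination h3)
  exact ⟨{
    α := Units.mkOfMulEqOne a (b * c) habc
    β := Units.mkOfMulEqOne b (c * a) (by linear_combination habc)
    γ := Units.mkOfMulEqOne c (a * b) (by linear_combination habc)
    add_add_eq_one := inj (by
      simp only [Units.val_mkOfMulEqOne, map_add, map_one]
      linear_combination h1)
    mul_add_mul_add_mul_eq_neg_one := inj (by
      simp only [Units.val_mkOfMulEqOne, map_add, map_mul, map_neg, map_one]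
      linear_combination -h2)
    mul_mul_eq_one := by simpa [mul_assoc] using habc }⟩

end TribonacciRoots

theorem Nat.Prime.not_dvd_forty_four {p : ℕ} (hp : p.Prime) (hp2 : p ≠ 2) (hp11 : p ≠ 11) :
    ¬p ∣ 44 := by
  intro h
  rcases hp.dvd_mul.1 (show p ∣ 2 * 2 * 11 from h) with h | h
  · exact hp2 ((Nat.prime_dvd_prime_iff_eq hp Nat.prime_two).1 ((hp.dvd_mul.1 h).elim id id))
  · exact hp11 ((Nat.prime_dvd_prime_iff_eq hp (by norm_num)).1 h)

theorem ZMod.not_isSquare_neg_three {p : ℕ} [Fact p.Prime] (hp2 : p ≠ 2) (hp3 : p % 3 = 2) :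
    ¬IsSquare (-3 : ZMod p) := by
  rintro ⟨y, hy⟩
  have h2 : (2 : ZMod p) ≠ 0 := by
    intro h
    have := Nat.le_of_dvd two_pos ((ZMod.natCast_eq_zero_iff 2 p).1 (by exact_mod_cast h))
    omega
  set ω := (y - 1) / 2
  have hω : ω ^ 2 + ω + 1 = 0 := by
    simp only [ω]
    field_simp
    linear_combination -hy
  -- `ω` is a cube root of unity, and `ω ^ (p - 1) = 1` with `p - 1 ≡ 1 [MOD 3]`.
  have hω1 : ω = 1 := by
    have h := ZMod.pow_card_sub_one_eq_one (a := ω) (by rintro h; simp [h] at hω)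
    rwa [show p - 1 = 3 * (p / 3) + 1 by omega, pow_succ, pow_mul,
      show ω ^ 3 = 1 by linear_combination (ω - 1) * hω, one_pow, one_mul] at h
  have h3 : ((3 : ℕ) : ZMod p) = 0 := by
    rw [hω1] at hω
    push_cast
    linear_combination hω
  have := Nat.le_of_dvd three_pos ((ZMod.natCast_eq_zero_iff 3 p).1 h3)
  omega

theorem ZMod.isUnit_of_castHom_ne_zero {p d : ℕ} [Fact p.Prime] (hd : d ≠ 0) {x : ZMod (p ^ d)}
    (hx : ZMod.castHom (dvd_pow_self p hd) (ZMod p) x ≠ 0) : IsUnit x := by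
  rw [← ZMod.natCast_zmod_val x] at hx ⊢
  rw [ZMod.isUnit_natCast_iff_not_dvd_pow Fact.out (Nat.pos_of_ne_zero hd)]
  rwa [map_natCast, Ne, ZMod.natCast_eq_zero_iff] at hx

namespace TribonacciRoots

variable {p : ℕ} [Fact p.Prime]

theorem quadratic_ne_zero (hp2 : p ≠ 2) (hp11 : p ≠ 11) (hp3 : p % 3 = 2)
    (r : TribonacciRoots (ZMod p)) (x : ZMod p) : x ^ 2 - 7 * x + 4 ≠ 0 := by
  intro hx
  have h22 : ((22 : ℕ) : ZMod p) ≠ 0 := by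
    rw [Ne, ZMod.natCast_eq_zero_iff]
    exact fun h ↦ Nat.Prime.not_dvd_forty_four Fact.out hp2 hp11 (h.trans (by norm_num))
  push_cast at h22
  refine ZMod.not_isSquare_neg_three hp2 hp3 ⟨(2 * x - 7) * r.vandermonde / 22, ?_⟩
  field_simp
  linear_combination -(2 * x - 7) ^ 2 * r.vandermonde_sq + 176 * hx

theorem pow_succ_dvd_tribonacci {k : ℕ} (hp2 : p ≠ 2) (hp11 : p ≠ 11) (hp3 : p % 3 = 2)
    (r : TribonacciRoots (ZMod (p ^ (k + 1)))) {T : ℤ → ℤ} (hT0 : T 0 = 0) (hT1 : T 1 = 1)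
    (hT2 : T 2 = 1) (hT : ∀ n, T (n + 3) = T (n + 2) + T (n + 1) + T n) {m : ℤ}
    (hm : ((p : ℤ) - 1) * p ^ k ∣ 3 * m - 1) :
    (p : ℤ) ^ (k + 1) ∣ T m ∧ (p : ℤ) ^ (k + 1) ∣ T (m - 2) := by
  have unit {n : ℕ} (hn : n ∣ 44) : IsUnit (n : ZMod (p ^ (k + 1))) :=
    (ZMod.isUnit_natCast_iff_not_dvd_pow Fact.out k.succ_pos).2 fun h ↦
      Nat.Prime.not_dvd_forty_four Fact.out hp2 hp11 (h.trans hn)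
  have two : IsUnit (2 : ZMod (p ^ (k + 1))) := by exact_mod_cast unit (n := 2) (by norm_num)
  have hV : IsUnit r.vandermonde := by
    refine (isUnit_pow_iff two_ne_zero).1 ?_
    rw [vandermonde_sq]
    exact_mod_cast (unit (n := 44) dvd_rfl).neg
  have hQ (x : ZMod (p ^ (k + 1))) : IsUnit (x ^ 2 - 7 * x + 4) := by
    refine ZMod.isUnit_of_castHom_ne_zero k.succ_ne_zero ?_
    rw [map_add, map_sub, map_mul, map_pow, map_ofNat, map_ofNat]
    exact (r.map (ZMod.castHom (dvd_pow_self p k.succ_ne_zero) (ZMod p))).quadratic_ne_zero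
      hp2 hp11 hp3 _
  have hm' (u : (ZMod (p ^ (k + 1)))ˣ) : u ^ (3 * m - 1) = 1 := by
    obtain ⟨t, ht⟩ := hm
    have htot : ((p : ℤ) - 1) * p ^ k = ((p ^ (k + 1)).totient : ℕ) := by
      rw [Nat.totient_prime_pow_succ Fact.out]
      push_cast [Nat.cast_sub (Fact.out : p.Prime).one_le]
      ring
    rw [ht, htot, zpow_mul, zpow_natCast, ZMod.pow_totient, one_zpow]
  obtain ⟨h1, h2⟩ := r.intCast_tribonacci_eq_zero hT0 hT1 hT2 hT two hV hQ hm'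
  simp only [ZMod.intCast_zmod_eq_zero_iff_dvd, Nat.cast_pow] at h1 h2
  exact ⟨h1, h2⟩

end TribonacciRoots

/-- Let `p ∉ {2,11}` be a prime with `p ≡ 2 (mod 3)` such that `X³ − X² − X − 1` splits
over `ℚ_p`. Then (1) if `3n ≡ 1 (mod p−1)` then `ν_p(T(n)) ≥ ν_p(3n−1)`, and
(2) if `3n ≡ −5 (mod p−1)` then `ν_p(T(n)) ≥ ν_p(3n+5)`, expressed via divisibility by
powers of `p`. -/
theorem tribonacci_rational_zero_of_splits
    (T : ℤ → ℤ)
    (hT0 : T 0 = 0) (hT1 : T 1 = 1) (hT2 : T 2 = 1)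
    (hTrec : ∀ n : ℤ, T (n + 3) = T (n + 2) + T (n + 1) + T n)
    (p : ℕ) [hp : Fact (Nat.Prime p)] (hp2 : p ≠ 2) (hp11 : p ≠ 11)
    (hp3 : p % 3 = 2)
    (hsplit : ((X ^ 3 - X ^ 2 - X - 1 : ℚ_[p][X])).Splits) :
    (∀ n : ℤ, ((p : ℤ) - 1) ∣ (3 * n - 1) →
      ∀ k : ℕ, (p : ℤ) ^ k ∣ (3 * n - 1) → (p : ℤ) ^ k ∣ T n) ∧
    (∀ n : ℤ, ((p : ℤ) - 1) ∣ (3 * n + 5) →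
      ∀ k : ℕ, (p : ℤ) ^ k ∣ (3 * n + 5) → (p : ℤ) ^ k ∣ T n) := by
  obtain ⟨r⟩ := TribonacciRoots.nonempty_of_splits ℤ_[p] hsplit
  have key (k : ℕ) {m : ℤ} (hm : ((p : ℤ) - 1) * p ^ k ∣ 3 * m - 1) :
      (p : ℤ) ^ (k + 1) ∣ T m ∧ (p : ℤ) ^ (k + 1) ∣ T (m - 2) :=
    (r.map (PadicInt.toZModPow (k + 1))).pow_succ_dvd_tribonacci hp2 hp11 hp3 hT0 hT1 hT2 hTrec hm
  have coprime (k : ℕ) : IsCoprime ((p : ℤ) - 1) ((p : ℤ) ^ k) :=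
    IsCoprime.pow_right ⟨-1, 1, by ring⟩
  refine ⟨fun n hn k hk ↦ ?_, fun n hn k hk ↦ ?_⟩
  · exact (pow_dvd_pow _ k.le_succ).trans (key k ((coprime k).mul_dvd hn hk)).1
  · have hm : ((p : ℤ) - 1) * p ^ k ∣ 3 * (n + 2) - 1 := by
      rw [show 3 * (n + 2) - 1 = 3 * n + 5 by ring]
      exact (coprime k).mul_dvd hn hk
    simpa using (pow_dvd_pow _ k.le_succ).trans (key k hm).2
end

section
/- Let α ∈ ℂ be algebraic of degree 3 over ℚ, with conjugates α₁ = α, α₂, α₃ (the three roots in ℂ of its minimal polynomial over ℚ). Assume that ℚ(α) is not a Galois (normal) extension of ℚ, and that the field ℚ(α₁, α₂, α₃) ⊆ ℂ contains no primitive cube root of unity (no element z with z² + z + 1 = 0). If ξ₁, ξ₂, ξ₃ ∈ ℂ are roots of unity (each satisfying ξᵢ^{mᵢ} = 1 for some integer mᵢ ≥ 1) such that α₁ξ₁ + α₂ξ₂ + α₃ξ₃ = 0, then ξ₁ = ξ₂ = ξ₃, and hence α₁ + α₂ + α₃ = 0. -/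
/-!
The `ξᵢ` lie in the abelian extension `ℚ(μ_∞)`. A root there of the minimal polynomial `p` of `α`
would embed `ℚ(α)` into an abelian extension and make it Galois, so `p` stays irreducible over
`ℚ(μ_∞)`, and its Galois group over `ℚ(μ_∞)` contains the 3-cycle `(α₁ α₂ α₃)`. Applying it to
the relation gives the circulant system `∑ᵢ α_{i+k} ξᵢ = 0`; pairing with the characters of
`ℤ/3` yields `(α₁ + ω α₂ + ω² α₃)(ξ₁ + ω² ξ₂ + ω ξ₃) = 0` and its conjugate, and the first factors
can only vanish if `ω = (α₃ - α₁) / (α₂ - α₃)` lies in the splitting field.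
-/

open Polynomial IntermediateField

theorem exists_smul_cycle {G X : Type*} [Group G] [MulAction G X] {a b c : X}
    (hab : a ≠ b) (hac : a ≠ c) (hbc : b ≠ c)
    (hmaps : ∀ (g : G) (x : X), x = a ∨ x = b ∨ x = c → g • x = a ∨ g • x = b ∨ g • x = c)
    {σ τ : G} (hσ : σ • a = b) (hτ : τ • a = c) :
    ∃ ρ : G, ρ • a = b ∧ ρ • b = c ∧ ρ • c = a := by
  have hσb := hmaps σ b (by simp)
  have hσc := hmaps σ c (by simp)
  have hτb := hmaps τ b (by simp)
  have hτc := hmaps τ c (by simp)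
  have hσi : ∀ x y : X, σ • x = σ • y → x = y := fun x y => smul_left_cancel σ
  have hτi : ∀ x y : X, τ • x = τ • y → x = y := fun x y => smul_left_cancel τ
  -- `σ` is the required cycle or the transposition `(a b)`; in the latter case `τ` is either the
  -- other 3-cycle, whose square works, or the transposition `(a c)`, and then `τσ` works.
  by_cases h : σ • b = c
  · exact ⟨σ, hσ, h, by grind⟩
  by_cases h' : τ • c = b
  · exact ⟨τ * τ, by grind [mul_smul], by grind [mul_smul], by grind [mul_smul]⟩
  · exact ⟨τ * σ, by grind [mul_smul], by grind [mul_smul], by grind [mul_smul]⟩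

theorem Polynomial.eq_or_eq_or_eq_of_isRoot_of_natDegree_eq_three {R : Type*} [CommRing R]
    [IsDomain R] {f : R[X]} (hf : f.natDegree = 3) {a b c x : R} (hab : a ≠ b) (hac : a ≠ c)
    (hbc : b ≠ c) (ha : f.IsRoot a) (hb : f.IsRoot b) (hc : f.IsRoot c) (hx : f.IsRoot x) :
    x = a ∨ x = b ∨ x = c := by
  have hf0 : f ≠ 0 := by rintro rfl; simp at hf
  have hnodup : (a ::ₘ b ::ₘ {c}).Nodup := by simp [hab, hac, hbc]
  have hle : a ::ₘ b ::ₘ {c} ≤ f.roots :=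
    (Multiset.le_iff_subset hnodup).2 (by simp_all [Multiset.subset_iff])
  have hroots : a ::ₘ b ::ₘ {c} = f.roots :=
    Multiset.eq_of_le_of_card_le hle (by simpa [hf] using f.card_roots')
  simpa [← hroots] using (mem_roots hf0).2 hx

theorem Normal.exists_algEquiv_cycle {F E : Type*} [Field F] [Field E] [Algebra F E]
    [Normal F E] {p : F[X]} (hirr : Irreducible p) (hdeg : p.natDegree = 3) {a b c : E}
    (hab : a ≠ b) (hac : a ≠ c) (hbc : b ≠ c)
    (ha : aeval a p = 0) (hb : aeval b p = 0) (hc : aeval c p = 0) :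
    ∃ σ : E ≃ₐ[F] E, σ a = b ∧ σ b = c ∧ σ c = a := by
  have hisRoot : ∀ {x : E}, aeval x p = 0 → (p.map (algebraMap F E)).IsRoot x := fun hx => by
    rwa [IsRoot, eval_map_algebraMap]
  have hroot : ∀ x : E, aeval x p = 0 → x = a ∨ x = b ∨ x = c := fun x hx =>
    (p.map (algebraMap F E)).eq_or_eq_or_eq_of_isRoot_of_natDegree_eq_three
      (by rw [natDegree_map, hdeg]) hab hac hbc (hisRoot ha) (hisRoot hb) (hisRoot hc) (hisRoot hx)
  have hconj : ∀ x : E, aeval x p = 0 → ∃ σ : E ≃ₐ[F] E, σ a = x := fun x hx =>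
    minpoly.exists_algEquiv_of_root' (Algebra.IsAlgebraic.isAlgebraic a)
      (by rw [← minpoly.eq_of_irreducible hirr ha, map_mul, hx, zero_mul])
  obtain ⟨σ, hσ⟩ := hconj b hb
  obtain ⟨τ, hτ⟩ := hconj c hc
  refine exists_smul_cycle hab hac hbc (fun g x hx => hroot _ ?_) hσ hτ
  rcases hx with rfl | rfl | rfl <;> simp [aeval_algEquiv, ha, hb, hc]

theorem cyclic_shifts_eq_zero_of_irreducible {F L : Type*} [Field F] [Field L] [IsAlgClosed L]
    [Algebra F L] {p : F[X]} (hirr : Irreducible p) (hdeg : p.natDegree = 3) {a b c : L}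
    (hab : a ≠ b) (hac : a ≠ c) (hbc : b ≠ c)
    (ha : aeval a p = 0) (hb : aeval b p = 0) (hc : aeval c p = 0) {x y z : F}
    (h : a * algebraMap F L x + b * algebraMap F L y + c * algebraMap F L z = 0) :
    b * algebraMap F L x + c * algebraMap F L y + a * algebraMap F L z = 0 ∧
      c * algebraMap F L x + a * algebraMap F L y + b * algebraMap F L z = 0 := by
  set E := adjoin F (p.rootSet L)
  have : Normal F E := by
    have := adjoin_rootSet_isSplittingField (IsAlgClosed.splits (p.map (algebraMap F L)))
    exact Normal.of_isSplittingField p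
  have hmem : ∀ {u : L}, aeval u p = 0 → u ∈ E := fun hu =>
    subset_adjoin F _ ((mem_rootSet_of_ne hirr.ne_zero).2 hu)
  have hrootE : ∀ {u : L} (hu : aeval u p = 0), aeval (⟨u, hmem hu⟩ : E) p = 0 := fun hu =>
    (algebraMap E L).injective (by rwa [map_zero, ← aeval_algebraMap_apply])
  let rel : E → E → E → E := fun u v w =>
    u * algebraMap F E x + v * algebraMap F E y + w * algebraMap F E z
  have hrel_map : ∀ (σ : E ≃ₐ[F] E) (u v w : E), σ (rel u v w) = rel (σ u) (σ v) (σ w) := by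
    intro σ u v w
    simp only [rel, map_add, map_mul, AlgEquiv.commutes]
  obtain ⟨σ, h₁, h₂, h₃⟩ := Normal.exists_algEquiv_cycle hirr hdeg
    (Subtype.coe_ne_coe.1 hab) (Subtype.coe_ne_coe.1 hac) (Subtype.coe_ne_coe.1 hbc)
    (hrootE ha) (hrootE hb) (hrootE hc)
  have h₀ : rel ⟨a, hmem ha⟩ ⟨b, hmem hb⟩ ⟨c, hmem hc⟩ = 0 := Subtype.ext h
  have hσ := congrArg σ h₀
  rw [hrel_map, h₁, h₂, h₃, map_zero] at hσ
  have hσσ := congrArg σ hσ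
  rw [hrel_map, h₁, h₂, h₃, map_zero] at hσσ
  exact ⟨congrArg Subtype.val hσ, congrArg Subtype.val hσσ⟩

theorem minpoly.irreducible_map_of_not_normal {K L F : Type*} [Field K] [Field L] [Field F]
    [Algebra K L] [Algebra K F] [IsAbelianGalois K F] {α : L} (hα : IsIntegral K α)
    (hdeg : (minpoly K α).natDegree ≤ 3) (hn : ¬ Normal K K⟮α⟯) :
    Irreducible ((minpoly K α).map (algebraMap K F)) := by
  refine irreducible_of_degree_le_three_of_not_isRoot ?_ fun x hx => hn ?_
  · rw [natDegree_map, Finset.mem_Icc]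
    exact ⟨minpoly.natDegree_pos hα, hdeg⟩
  · have hx : x ∈ (minpoly K α).aroots F := by
      rw [mem_aroots, aeval_def, eval₂_eq_eval_map]
      exact ⟨minpoly.ne_zero hα, hx⟩
    have := IsAbelianGalois.of_algHom ((algHomAdjoinIntegralEquiv K hα).symm ⟨x, hx⟩)
    infer_instance

-- `ℚ(μ_∞)`, with the generators written in the shape expected by `IsCyclotomicExtension Set.univ`.
noncomputable def cyclotomicClosure : IntermediateField ℚ ℂ :=
  adjoin ℚ {z : ℂ | ∃ n ∈ (Set.univ : Set ℕ), n ≠ 0 ∧ z ^ n = 1}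

instance : IsAbelianGalois ℚ cyclotomicClosure := by
  have : IsCyclotomicExtension Set.univ ℚ cyclotomicClosure := by
    change IsCyclotomicExtension Set.univ ℚ cyclotomicClosure.toSubalgebra
    rw [cyclotomicClosure, adjoin_toSubalgebra_of_isAlgebraic]
    · exact Algebra.isCyclotomicExtension_adjoin_of_exists_isPrimitiveRoot _ _ _ fun n _ hn =>
        ⟨_, Complex.isPrimitiveRoot_exp n hn⟩
    · rintro z ⟨n, -, hn, hz⟩
      exact IsIntegral.isAlgebraic ⟨X ^ n - 1, monic_X_pow_sub_C 1 hn, by simp [hz]⟩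
  exact IsCyclotomicExtension.isAbelianGalois Set.univ ℚ _

theorem mem_cyclotomicClosure {z : ℂ} {n : ℕ} (hn : n ≠ 0) (hz : z ^ n = 1) :
    z ∈ cyclotomicClosure :=
  subset_adjoin ℚ _ ⟨n, Set.mem_univ n, hn, hz⟩

theorem IsPrimitiveRoot.sq_add_self_add_one_eq_zero {R : Type*} [CommRing R] [IsDomain R]
    {ω : R} (hω : IsPrimitiveRoot ω 3) : ω ^ 2 + ω + 1 = 0 := by
  have h := hω.geom_sum_eq_zero (by norm_num)
  simp only [Finset.sum_range_succ, Finset.sum_range_zero, pow_zero, pow_one] at h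
  linear_combination h

theorem add_mul_add_sq_mul_ne_zero {K L : Type*} [Field K] [Field L] [Algebra K L]
    {S : IntermediateField K L} (hS : ∀ z ∈ S, z ^ 2 + z + 1 ≠ 0) {ω a b c : L}
    (hω : ω ^ 2 + ω + 1 = 0) (ha : a ∈ S) (hb : b ∈ S) (hc : c ∈ S) (hbc : b ≠ c) :
    a + ω * b + ω ^ 2 * c ≠ 0 := by
  intro h
  have hquot : (c - a) / (b - c) = ω := by
    rw [div_eq_iff (sub_ne_zero.2 hbc)]
    linear_combination -h + c * hω
  exact hS _ (div_mem (sub_mem hc ha) (sub_mem hb hc)) (hquot ▸ hω)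

theorem eq_and_eq_of_circulant_eq_zero {R : Type*} [CommRing R] [IsDomain R] {ω : R}
    (hω : IsPrimitiveRoot ω 3) {a b c x y z : R}
    (h₀ : a * x + b * y + c * z = 0) (h₁ : b * x + c * y + a * z = 0)
    (h₂ : c * x + a * y + b * z = 0)
    (ha : a + ω * b + ω ^ 2 * c ≠ 0) (hb : a + ω * c + ω ^ 2 * b ≠ 0) :
    x = y ∧ y = z := by
  have hω₃ : ω ^ 3 = 1 := hω.pow_eq_one
  have hω₂ := hω.sq_add_self_add_one_eq_zero
  have hu : x + ω ^ 2 * y + ω * z = 0 := by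
    refine (mul_eq_zero.1 ?_).resolve_left ha
    linear_combination h₀ + ω * h₁ + ω ^ 2 * h₂ + (b * y + c * z + ω * c * y) * hω₃
  have hv : x + ω * y + ω ^ 2 * z = 0 := by
    refine (mul_eq_zero.1 ?_).resolve_left hb
    linear_combination h₀ + ω ^ 2 * h₁ + ω * h₂ + (b * y + ω * b * z + c * z) * hω₃
  have hyz : y = z := by
    have hω₀ : ω * (ω - 1) ≠ 0 :=
      mul_ne_zero (hω.ne_zero (by norm_num)) (sub_ne_zero.2 (hω.ne_one (by norm_num)))
    have h := (mul_eq_zero.1 (by linear_combination hu - hv : ω * (ω - 1) * (y - z) = 0))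
    exact sub_eq_zero.1 (h.resolve_left hω₀)
  subst hyz
  exact ⟨by linear_combination hu - y * hω₂, rfl⟩

/-- Let `α` be algebraic of degree 3 over `ℚ` with conjugates `α₁ = α, α₂, α₃ ∈ ℂ`.
If `ℚ(α)/ℚ` is not normal and the splitting field `ℚ(α₁,α₂,α₃) ⊆ ℂ` contains no
primitive cube root of unity, then any roots-of-unity relation
`α₁ξ₁ + α₂ξ₂ + α₃ξ₃ = 0` forces `ξ₁ = ξ₂ = ξ₃`, and hence `α₁ + α₂ + α₃ = 0`. -/
theorem cubic_roots_of_unity_relation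
    (α₁ α₂ α₃ : ℂ)
    (hdeg : (minpoly ℚ α₁).natDegree = 3)
    (hroot₂ : Polynomial.aeval α₂ (minpoly ℚ α₁) = 0)
    (hroot₃ : Polynomial.aeval α₃ (minpoly ℚ α₁) = 0)
    (h12 : α₁ ≠ α₂) (h13 : α₁ ≠ α₃) (h23 : α₂ ≠ α₃)
    (hnotGalois : ¬ Normal ℚ (IntermediateField.adjoin ℚ ({α₁} : Set ℂ)))
    (hnocube : ∀ z : ℂ,
      z ∈ IntermediateField.adjoin ℚ ({α₁, α₂, α₃} : Set ℂ) → z ^ 2 + z + 1 ≠ 0)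
    (ξ₁ ξ₂ ξ₃ : ℂ)
    (hξ₁ : ∃ m : ℕ, 1 ≤ m ∧ ξ₁ ^ m = 1)
    (hξ₂ : ∃ m : ℕ, 1 ≤ m ∧ ξ₂ ^ m = 1)
    (hξ₃ : ∃ m : ℕ, 1 ≤ m ∧ ξ₃ ^ m = 1)
    (hsum : α₁ * ξ₁ + α₂ * ξ₂ + α₃ * ξ₃ = 0) :
    (ξ₁ = ξ₂ ∧ ξ₂ = ξ₃) ∧ α₁ + α₂ + α₃ = 0 := by
  have hα₁ : IsIntegral ℚ α₁ := by
    by_contra h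
    simp [minpoly.eq_zero h] at hdeg
  have hξ : ∀ {ξ : ℂ}, (∃ m : ℕ, 1 ≤ m ∧ ξ ^ m = 1) → ξ ∈ cyclotomicClosure :=
    fun ⟨_, hm, h⟩ => mem_cyclotomicClosure (by omega) h
  have hroot : ∀ {u : ℂ}, aeval u (minpoly ℚ α₁) = 0 →
      aeval u ((minpoly ℚ α₁).map (algebraMap ℚ cyclotomicClosure)) = 0 := fun hu => by
    rwa [aeval_map_algebraMap]
  obtain ⟨h₁, h₂⟩ := cyclic_shifts_eq_zero_of_irreducible
    (minpoly.irreducible_map_of_not_normal hα₁ hdeg.le hnotGalois)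
    (by rw [natDegree_map, hdeg]) h12 h13 h23
    (hroot (minpoly.aeval ℚ α₁)) (hroot hroot₂) (hroot hroot₃)
    (x := ⟨ξ₁, hξ hξ₁⟩) (y := ⟨ξ₂, hξ hξ₂⟩) (z := ⟨ξ₃, hξ hξ₃⟩) hsum
  obtain ⟨ω, hω⟩ : ∃ ω : ℂ, IsPrimitiveRoot ω 3 := ⟨_, Complex.isPrimitiveRoot_exp 3 (by norm_num)⟩
  have hS := subset_adjoin ℚ ({α₁, α₂, α₃} : Set ℂ)
  have hω₂ := hω.sq_add_self_add_one_eq_zero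
  obtain ⟨rfl, rfl⟩ := eq_and_eq_of_circulant_eq_zero hω hsum h₁ h₂
    (add_mul_add_sq_mul_ne_zero hnocube hω₂ (hS (by simp)) (hS (by simp)) (hS (by simp)) h23)
    (add_mul_add_sq_mul_ne_zero hnocube hω₂ (hS (by simp)) (hS (by simp)) (hS (by simp))
      h23.symm)
  obtain ⟨m, hm, hξ₁m⟩ := hξ₁
  have hξ₁0 : ξ₁ ≠ 0 := (pow_ne_zero_iff (by omega)).1 (hξ₁m ▸ one_ne_zero)
  exact ⟨⟨rfl, rfl⟩, (mul_eq_zero.1 (by linear_combination hsum)).resolve_right hξ₁0⟩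
end

section
/- Let λ ∈ ℂ be a root of P(X) = X³ − X² − X − 1 and let n ∈ ℤ. Set α = λⁿ · P′(λ)⁻¹, where P′(X) = 3X² − 2X − 1. Then α is algebraic of degree 3 over ℚ, the field ℚ(α) is not a Galois (normal) extension of ℚ, and the splitting field inside ℂ of the minimal polynomial of α over ℚ contains no primitive cube root of unity (no element z with z² + z + 1 = 0). -/
/-!
`P = X³ - X² - X - 1` has no rational root, so it is irreducible and `ℚ(λ)` is a cubic field.
The element `α` lies in `ℚ(λ)` but not in `ℚ`: writing `λⁿ = a + bλ + cλ²` with integer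
coordinates, `b` and `a + c` are never both even, whereas `q P′(λ) = -q - 2qλ + 3qλ²` would make
them so. Since `[ℚ(λ) : ℚ] = 3` is prime, `ℚ(α) = ℚ(λ)` and `α` has degree `3`.

For a root `x` of `P` the other two roots `μ, μ'` satisfy `(μ - μ')² P′(x)² = disc P = -44`, so
`(μ - μ') P′(x)` is a square root of `-44`. A normal `ℚ(λ)` would contain it, but a cubic field
has no quadratic subfield.

The splitting field `M` of `P` contains the splitting field of the minimal polynomial of `α` and
has degree at most `3! = 6`. If `M` contained a root `ω` of `X² + X + 1`, it would contain the
real number `(μ - μ') P′(t) (2ω + 1)`, a square root of `132`, where `t` is the real root of `P`.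
Then the real subfield of `M` would have degree divisible by `2` and by `3`, hence be all of `M`,
which is absurd since `2ω + 1` is not real.
-/

open Polynomial IntermediateField Module

namespace IntermediateField

variable {F L : Type*} [Field F] [Field L] [Algebra F L]

theorem adjoin_simple_eq_of_finrank_prime {E : IntermediateField F L} (hE : (finrank F E).Prime)
    {x : L} (hxE : x ∈ E) (hx : x ∉ (⊥ : IntermediateField F L)) : F⟮x⟯ = E := by
  have : FiniteDimensional F E := Module.finite_of_finrank_pos hE.pos
  have hle : F⟮x⟯ ≤ E := adjoin_simple_le_iff.mpr hxE
  refine eq_of_le_of_finrank_eq hle ?_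
  rcases (Nat.dvd_prime hE).mp (finrank_dvd_of_le_right hle) with h | h
  · exact absurd (finrank_adjoin_simple_eq_one_iff.mp h) hx
  · exact h

theorem finrank_adjoin_simple_eq_two_of_sq_eq {y : L} {a : F} (hy : y ^ 2 = algebraMap F L a)
    (ha : ¬IsSquare a) : finrank F F⟮y⟯ = 2 := by
  have hirr : Irreducible (X ^ 2 - C a) :=
    X_pow_sub_C_irreducible_of_prime Nat.prime_two fun b hb => ha ⟨b, by rw [← hb, sq]⟩
  have hmonic := monic_X_pow_sub_C a two_ne_zero
  have hmin : minpoly F y = X ^ 2 - C a :=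
    (minpoly.eq_of_irreducible_of_monic hirr (by simp [hy]) hmonic).symm
  rw [adjoin.finrank ⟨_, hmonic, by simp [hy]⟩, hmin, natDegree_X_pow_sub_C]

theorem adjoin_rootSet_minpoly_le {N : IntermediateField F L} [hN : Normal F N] {x : L}
    (hx : x ∈ N) : adjoin F ((minpoly F x).rootSet L) ≤ N := by
  have hsplit := hN.splits (⟨x, hx⟩ : N)
  rw [minpoly_eq] at hsplit
  rw [adjoin_le_iff, ← hsplit.image_rootSet N.val]
  rintro _ ⟨y, -, rfl⟩
  exact y.2

end IntermediateField

theorem Polynomial.IsSplittingField.finrank_le_factorial {F K : Type*} [Field F] [Field K]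
    [Algebra F K] (p : F[X]) [IsSplittingField F K p] (hp : p.Separable) :
    finrank F K ≤ p.natDegree.factorial := by
  rw [(IsSplittingField.algEquiv K p).toLinearEquiv.finrank_eq, ← Gal.card_of_separable hp]
  have : Fact ((p.map (algebraMap F K)).Splits) := ⟨IsSplittingField.splits K p⟩
  calc Nat.card p.Gal ≤ Nat.card (Equiv.Perm (p.rootSet K)) :=
        Nat.card_le_card_of_injective _ (Gal.galActionHom_injective p K)
    _ = (p.rootSet K).ncard.factorial := by rw [Nat.card_perm, Nat.card_coe_set_eq]
    _ ≤ p.natDegree.factorial := Nat.factorial_le (ncard_rootSet_le p K)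

namespace Complex

theorem im_eq_zero_of_sq_eq_ofReal {w : ℂ} {r : ℝ} (hr : 0 < r) (h : w ^ 2 = r) : w.im = 0 := by
  have hre := congrArg re h
  have him := congrArg im h
  simp only [sq, mul_re, mul_im, ofReal_re, ofReal_im] at hre him
  rcases mul_eq_zero.mp (by linarith : w.re * w.im = 0) with h0 | h0
  · rw [h0] at hre
    nlinarith [sq_nonneg w.im]
  · exact h0

theorem im_ne_zero_of_sq_eq_ofReal {w : ℂ} {r : ℝ} (hr : r < 0) (h : w ^ 2 = r) : w.im ≠ 0 := by
  intro him
  have hre := congrArg re h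
  simp only [sq, mul_re, him, ofReal_re] at hre
  nlinarith [sq_nonneg w.re]

noncomputable def realSubfield : IntermediateField ℚ ℂ := (ofRealAm.restrictScalars ℚ).fieldRange

theorem mem_realSubfield {z : ℂ} : z ∈ realSubfield ↔ z.im = 0 := by
  refine ⟨?_, fun h => ⟨z.re, ?_⟩⟩
  · rintro ⟨r, rfl⟩
    exact ofReal_im r
  · apply Complex.ext <;> simp [h]

end Complex

namespace Tribonacci

noncomputable def poly : ℚ[X] := X ^ 3 - X ^ 2 - X - 1

theorem poly_monic : poly.Monic := by unfold poly; monicity!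

theorem natDegree_poly : poly.natDegree = 3 := by unfold poly; compute_degree!

@[simp]
theorem aeval_poly {A : Type*} [CommRing A] [Algebra ℚ A] (x : A) :
    aeval x poly = x ^ 3 - x ^ 2 - x - 1 := by
  simp [poly]

theorem irreducible_poly : Irreducible poly := by
  rw [irreducible_iff_roots_eq_zero_of_degree_le_three (by rw [natDegree_poly]; norm_num)
    natDegree_poly.le, Multiset.eq_zero_iff_forall_notMem]
  intro q hq
  have hroot : aeval q (X ^ 3 - X ^ 2 - X - 1 : ℤ[X]) = 0 := by
    simpa [poly] using (isRoot_of_mem_roots hq).eq_zero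
  obtain ⟨m, rfl⟩ := isInteger_of_is_root_of_monic (by monicity!) hroot
  have hm3 : m ^ 3 - m ^ 2 - m - 1 = 0 := by
    simp only [map_sub, map_pow, aeval_X, map_one, algebraMap_int_eq, eq_intCast] at hroot
    exact_mod_cast hroot
  have hm : m * (m ^ 2 - m - 1) = 1 := by linear_combination hm3
  rcases Int.eq_one_or_neg_one_of_mul_eq_one' hm with ⟨rfl, h⟩ | ⟨rfl, h⟩ <;> norm_num at h

section Field

variable {K : Type*} [Field K] {x : K}

theorem ne_zero_of_root (hx : x ^ 3 - x ^ 2 - x - 1 = 0) : x ≠ 0 := by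
  rintro rfl; norm_num at hx

-- `-44` is the discriminant of `poly`, and `3x² - 2x - 5 = -(μ - μ')²` for the other roots
-- `μ, μ'`.
theorem mul_deriv_sq_eq (hx : x ^ 3 - x ^ 2 - x - 1 = 0) :
    (3 * x ^ 2 - 2 * x - 5) * (3 * x ^ 2 - 2 * x - 1) ^ 2 = 44 := by
  linear_combination (27 * x ^ 3 - 27 * x ^ 2 - 27 * x + 49) * hx

theorem deriv_ne_zero [CharZero K] (hx : x ^ 3 - x ^ 2 - x - 1 = 0) :
    3 * x ^ 2 - 2 * x - 1 ≠ 0 := by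
  intro h
  have := mul_deriv_sq_eq hx
  rw [h] at this
  norm_num at this

-- Multiplication by `x` swaps the parities of `b` and `a + c`.
theorem exists_int_coords_zpow (hx : x ^ 3 - x ^ 2 - x - 1 = 0) (n : ℤ) :
    ∃ a b c : ℤ, x ^ n = a + b * x + c * x ^ 2 ∧ (b % 2 = 1 ∨ (a + c) % 2 = 1) := by
  have hx0 := ne_zero_of_root hx
  induction n using Int.induction_on with
  | zero => exact ⟨1, 0, 0, by simp, by decide⟩
  | succ i ih =>
    obtain ⟨a, b, c, h, hpar⟩ := ih
    refine ⟨c, a + c, b + c, ?_, by omega⟩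
    rw [zpow_add_one₀ hx0, h]
    push_cast
    linear_combination (c : K) * hx
  | pred i ih =>
    obtain ⟨a, b, c, h, hpar⟩ := ih
    refine ⟨b - a, c - a, a, mul_right_cancel₀ hx0 ?_, by omega⟩
    rw [← zpow_add_one₀ hx0, sub_add_cancel, h]
    push_cast
    linear_combination (-(a : K)) * hx

variable [Algebra ℚ K]

theorem minpoly_eq_poly (hx : x ^ 3 - x ^ 2 - x - 1 = 0) : minpoly ℚ x = poly :=
  (minpoly.eq_of_irreducible_of_monic irreducible_poly (by simpa using hx) poly_monic).symm

theorem isIntegral_of_root (hx : x ^ 3 - x ^ 2 - x - 1 = 0) : IsIntegral ℚ x :=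
  ⟨poly, poly_monic, by simpa [← aeval_def] using hx⟩

theorem finrank_adjoin_root (hx : x ^ 3 - x ^ 2 - x - 1 = 0) : finrank ℚ ℚ⟮x⟯ = 3 := by
  rw [adjoin.finrank (isIntegral_of_root hx), minpoly_eq_poly hx, natDegree_poly]

theorem eq_zero_of_add_mul_add_mul_sq_eq_zero (hx : x ^ 3 - x ^ 2 - x - 1 = 0) {a b c : ℚ}
    (h : algebraMap ℚ K a + algebraMap ℚ K b * x + algebraMap ℚ K c * x ^ 2 = 0) :
    a = 0 ∧ b = 0 ∧ c = 0 := by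
  have hg : C a + C b * X + C c * X ^ 2 = 0 := by
    by_contra hne
    have h3 := minpoly.degree_le_of_ne_zero ℚ x hne (by simpa using h)
    rw [minpoly_eq_poly hx, degree_eq_natDegree poly_monic.ne_zero, natDegree_poly] at h3
    have h2 : (C a + C b * X + C c * X ^ 2).degree ≤ 2 := by compute_degree
    exact absurd (h3.trans h2) (by decide)
  refine ⟨?_, ?_, ?_⟩
  · simpa using congrArg (coeff · 0) hg
  · simpa using congrArg (coeff · 1) hg
  · simpa using congrArg (coeff · 2) hg

theorem zpow_mul_inv_deriv_notMem_bot [CharZero K] (hx : x ^ 3 - x ^ 2 - x - 1 = 0) (n : ℤ) :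
    x ^ n * (3 * x ^ 2 - 2 * x - 1)⁻¹ ∉ (⊥ : IntermediateField ℚ K) := by
  intro hmem
  obtain ⟨q, hq⟩ := mem_bot.mp hmem
  have hxn : x ^ n = algebraMap ℚ K q * (3 * x ^ 2 - 2 * x - 1) := by
    rw [hq, inv_mul_cancel_right₀ (deriv_ne_zero hx)]
  obtain ⟨a, b, c, hco, hpar⟩ := exists_int_coords_zpow hx n
  obtain ⟨ha, hb, hc⟩ := eq_zero_of_add_mul_add_mul_sq_eq_zero hx
    (a := a + q) (b := b + 2 * q) (c := c - 3 * q) (by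
      simp only [map_add, map_sub, map_mul, map_intCast, map_ofNat]
      linear_combination hxn - hco)
  have hb' : b = 2 * a := by exact_mod_cast (by linarith : (b : ℚ) = 2 * a)
  have hc' : c = -3 * a := by exact_mod_cast (by linarith : (c : ℚ) = -3 * a)
  omega

end Field

theorem exists_root_mul_deriv_sq_eq {K : Type*} [Field K] [IsAlgClosed K] [CharZero K]
    {x : K} (hx : x ^ 3 - x ^ 2 - x - 1 = 0) :
    ∃ μ : K, μ ^ 3 - μ ^ 2 - μ - 1 = 0 ∧ ((2 * μ + x - 1) * (3 * x ^ 2 - 2 * x - 1)) ^ 2 = -44 := by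
  obtain ⟨s, hs⟩ := IsAlgClosed.exists_pow_nat_eq (-(3 * x ^ 2 - 2 * x - 5)) two_pos
  obtain ⟨μ, rfl⟩ : ∃ μ : K, 2 * μ + x - 1 = s := ⟨(s - x + 1) / 2, by field_simp; ring⟩
  have hquad : μ ^ 2 + (x - 1) * μ + (x ^ 2 - x - 1) = 0 := by
    have h4 : (4 : K) * (μ ^ 2 + (x - 1) * μ + (x ^ 2 - x - 1)) = 0 := by linear_combination hs
    simpa using h4
  refine ⟨μ, by linear_combination (μ - x) * hquad + hx, ?_⟩
  linear_combination (3 * x ^ 2 - 2 * x - 1) ^ 2 * hs - mul_deriv_sq_eq hx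

theorem not_normal_adjoin_root {K : Type*} [Field K] [Algebra ℚ K] [IsAlgClosed K] [CharZero K]
    {x : K} (hx : x ^ 3 - x ^ 2 - x - 1 = 0) : ¬Normal ℚ ℚ⟮x⟯ := by
  intro hN
  obtain ⟨μ, hμ, hsq⟩ := exists_root_mul_deriv_sq_eq hx
  have hxE := mem_adjoin_simple_self ℚ x
  -- `hN` is about `DivisionRing.toRatAlgebra`, the lemma expects `IntermediateField.algebra'`.
  have hμE : μ ∈ ℚ⟮x⟯ :=
    adjoin_rootSet_minpoly_le (hN := by convert hN; exact Subsingleton.elim _ _) hxE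
      (subset_adjoin _ _ (by
        rw [minpoly_eq_poly hx, mem_rootSet]
        exact ⟨poly_monic.ne_zero, by simpa using hμ⟩))
  have hyE : (2 * μ + x - 1) * (3 * x ^ 2 - 2 * x - 1) ∈ ℚ⟮x⟯ := by aesop
  have h2 := finrank_adjoin_simple_eq_two_of_sq_eq (F := ℚ) (a := -44)
    (by rw [hsq, map_neg, map_ofNat]) fun ⟨r, hr⟩ => by nlinarith [mul_self_nonneg r]
  have hdvd := finrank_dvd_of_le_right (adjoin_simple_le_iff.mpr hyE)
  rw [h2, finrank_adjoin_root hx] at hdvd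
  omega

theorem exists_real_root : ∃ t : ℝ, t ^ 3 - t ^ 2 - t - 1 = 0 := by
  have hcont : ContinuousOn (fun t : ℝ => t ^ 3 - t ^ 2 - t - 1) (Set.Icc 1 2) := by fun_prop
  obtain ⟨t, -, ht⟩ := intermediate_value_Icc (by norm_num) hcont (show (0 : ℝ) ∈ _ by norm_num)
  exact ⟨t, ht⟩

theorem isSplittingField_adjoin_rootSet : IsSplittingField ℚ (adjoin ℚ (poly.rootSet ℂ)) poly :=
  adjoin_rootSet_isSplittingField (IsAlgClosed.splits _)

theorem finrank_adjoin_rootSet_le : finrank ℚ (adjoin ℚ (poly.rootSet ℂ)) ≤ 6 := by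
  have := isSplittingField_adjoin_rootSet
  have h := IsSplittingField.finrank_le_factorial (K := adjoin ℚ (poly.rootSet ℂ)) poly
    irreducible_poly.separable
  rwa [natDegree_poly] at h

theorem mem_adjoin_rootSet_of_root {w : ℂ} (hw : w ^ 3 - w ^ 2 - w - 1 = 0) :
    w ∈ adjoin ℚ (poly.rootSet ℂ) :=
  subset_adjoin _ _ (mem_rootSet.mpr ⟨poly_monic.ne_zero, by simpa using hw⟩)

theorem adjoin_rootSet_minpoly_le_adjoin_rootSet {x : ℂ} (hx : x ∈ adjoin ℚ (poly.rootSet ℂ)) :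
    adjoin ℚ ((minpoly ℚ x).rootSet ℂ) ≤ adjoin ℚ (poly.rootSet ℂ) :=
  adjoin_rootSet_minpoly_le
    (hN := Normal.of_isSplittingField (hFEp := isSplittingField_adjoin_rootSet) poly) hx

theorem not_isSquare_132 : ¬IsSquare (132 : ℚ) := by
  rw [show (132 : ℚ) = (132 : ℕ) by norm_num, Rat.isSquare_natCast_iff]
  rintro ⟨r, hr⟩
  exact Nat.not_exists_sq (m := 11) (by norm_num) (by norm_num) ⟨r, hr.symm⟩

open Complex in
theorem sq_add_self_add_one_ne_zero_of_mem_adjoin_rootSet {z : ℂ}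
    (hz : z ∈ adjoin ℚ (poly.rootSet ℂ)) : z ^ 2 + z + 1 ≠ 0 := by
  intro hz3
  set M := adjoin ℚ (poly.rootSet ℂ)
  have := isSplittingField_adjoin_rootSet
  have : FiniteDimensional ℚ M := IsSplittingField.finiteDimensional M poly
  obtain ⟨t, ht⟩ := exists_real_root
  have htC : (t : ℂ) ^ 3 - (t : ℂ) ^ 2 - t - 1 = 0 := by exact_mod_cast congrArg ofReal ht
  obtain ⟨μ, hμ, hsq⟩ := exists_root_mul_deriv_sq_eq htC
  set w := (2 * μ + t - 1) * (3 * (t : ℂ) ^ 2 - 2 * t - 1) * (2 * z + 1)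
  have hw : w ^ 2 = (132 : ℝ) := by
    push_cast
    linear_combination (2 * z + 1) ^ 2 * hsq - 176 * hz3
  set R := M ⊓ realSubfield
  have htR : (t : ℂ) ∈ R := ⟨mem_adjoin_rootSet_of_root htC, mem_realSubfield.mpr (ofReal_im t)⟩
  have hwR : w ∈ R := by
    refine ⟨?_, mem_realSubfield.mpr (im_eq_zero_of_sq_eq_ofReal (by norm_num) hw)⟩
    have := mem_adjoin_rootSet_of_root hμ
    aesop
  have h3 : 3 ∣ finrank ℚ R :=
    finrank_adjoin_root htC ▸ finrank_dvd_of_le_right (adjoin_simple_le_iff.mpr htR)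
  have h2 : 2 ∣ finrank ℚ R :=
    finrank_adjoin_simple_eq_two_of_sq_eq (F := ℚ) (by rw [hw]; simp) not_isSquare_132 ▸
      finrank_dvd_of_le_right (adjoin_simple_le_iff.mpr hwR)
  have hRM : finrank ℚ R ∣ finrank ℚ M := finrank_dvd_of_le_right inf_le_left
  have hR0 : 0 < finrank ℚ R := Nat.pos_of_dvd_of_pos hRM finrank_pos
  have hRle : finrank ℚ R ≤ finrank ℚ M := Nat.le_of_dvd finrank_pos hRM
  have hM6 : finrank ℚ M ≤ 6 := finrank_adjoin_rootSet_le
  have hR : R = M := eq_of_le_of_finrank_le inf_le_left (by omega)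
  have hγ : 2 * z + 1 ∈ R := hR ▸ (by aesop)
  exact im_ne_zero_of_sq_eq_ofReal (by norm_num : (-3 : ℝ) < 0)
    (by push_cast; linear_combination 4 * hz3) (mem_realSubfield.mp hγ.2)

end Tribonacci

open Tribonacci

/-- Let `lam` be a root of `P(X) = X³ − X² − X − 1` and `n ∈ ℤ`. Then
`α = lamⁿ · P′(lam)⁻¹` is algebraic of degree 3 over `ℚ`, the field `ℚ(α)` is not a
normal extension of `ℚ`, and the splitting field of the minimal polynomial of `α`
inside `ℂ` contains no primitive cube root of unity. -/
theorem tribonacci_alpha_satisfies_hypotheses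
    (lam : ℂ) (hlam : lam ^ 3 - lam ^ 2 - lam - 1 = 0) (n : ℤ)
    (α : ℂ) (hα : α = lam ^ n * (3 * lam ^ 2 - 2 * lam - 1)⁻¹) :
    (minpoly ℚ α).natDegree = 3 ∧
    ¬ Normal ℚ (IntermediateField.adjoin ℚ ({α} : Set ℂ)) ∧
    (∀ z : ℂ,
      z ∈ IntermediateField.adjoin ℚ {x : ℂ | Polynomial.aeval x (minpoly ℚ α) = 0} →
      z ^ 2 + z + 1 ≠ 0) := by
  have hlamE := mem_adjoin_simple_self ℚ lam
  have hαE : α ∈ ℚ⟮lam⟯ := by rw [hα]; aesop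
  have hgen : ℚ⟮α⟯ = ℚ⟮lam⟯ := adjoin_simple_eq_of_finrank_prime
    (by rw [finrank_adjoin_root hlam]; exact Nat.prime_three) hαE
    (hα ▸ zpow_mul_inv_deriv_notMem_bot hlam n)
  have : FiniteDimensional ℚ ℚ⟮lam⟯ := adjoin.finiteDimensional (isIntegral_of_root hlam)
  have hint : IsIntegral ℚ α := isIntegral_iff.mp (IsIntegral.of_finite ℚ (⟨α, hαE⟩ : ℚ⟮lam⟯))
  have hroots : {x : ℂ | aeval x (minpoly ℚ α) = 0} = (minpoly ℚ α).rootSet ℂ := by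
    ext; simp [mem_rootSet_of_ne (minpoly.ne_zero hint)]
  have hαM : α ∈ adjoin ℚ (poly.rootSet ℂ) :=
    adjoin_simple_le_iff.mpr (mem_adjoin_rootSet_of_root hlam) hαE
  refine ⟨?_, hgen ▸ not_normal_adjoin_root hlam, fun z hz => ?_⟩
  · rw [← adjoin.finrank hint, hgen, finrank_adjoin_root hlam]
  · exact sq_add_self_add_one_ne_zero_of_mem_adjoin_rootSet
      (adjoin_rootSet_minpoly_le_adjoin_rootSet hαM (hroots ▸ hz))
end

section
/- Let p be a prime, Q a positive integer, and i, a ∈ ℤ. Then the following three statements are equivalent: (1) p^{ν_p(Q)} divides a − i; (2) the function n ↦ ν_p(n − a), with values in ℕ ∪ {∞}, is not constant on the residue class {n ∈ ℤ : n ≡ i (mod Q)}; (3) for every natural number k there exists an integer n with n ≡ i (mod Q) and p^k ∣ n − a (i.e. ν_p(n − a) is unbounded on the class). -/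
/-!
Let `v = ν_p(Q)`, so that `p^v ∣ n - i` for every `n` in the class. If `ν_p(i - a) < v`, the
ultrametric property forces `ν_p(n - a) = ν_p(i - a)` on the whole class. If instead
`p^v ∣ a - i`, then `gcd(Q, p^k) ∣ p^v ∣ a - i`, so Bézout gives `n` in the class with
`p^k ∣ n - a` for every `k`; and an unbounded valuation cannot be constant on the class, as it
would then be `∞` at both `i` and `i + Q`.
-/

/-- The `p`-adic valuation on `ℤ` with values in `ℕ∞`, with `ν_p(0) = ∞`. -/
noncomputable def nuInf (p : ℕ) (m : ℤ) : ℕ∞ :=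
  if m = 0 then ⊤ else (padicValInt p m : ℕ∞)

theorem Int.exists_dvd_sub_and_dvd_sub_of_gcd_dvd {M N i a : ℤ} (h : (M.gcd N : ℤ) ∣ a - i) :
    ∃ n, M ∣ n - i ∧ N ∣ n - a := by
  obtain ⟨c, hc⟩ := h
  refine ⟨i + M * M.gcdA N * c, ⟨M.gcdA N * c, by ring⟩, ⟨-(M.gcdB N * c), ?_⟩⟩
  linear_combination (-1 : ℤ) * hc - c * Int.gcd_eq_gcd_ab M N

theorem Nat.gcd_pow_dvd_pow_padicValNat {p Q : ℕ} (hp : p.Prime) (hQ : Q ≠ 0) (k : ℕ) :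
    Q.gcd (p ^ k) ∣ p ^ padicValNat p Q := by
  have : Fact p.Prime := ⟨hp⟩
  obtain ⟨j, -, hj⟩ := (Nat.dvd_prime_pow hp).1 (Nat.gcd_dvd_right Q (p ^ k))
  rw [hj]
  exact pow_dvd_pow p ((padicValNat_dvd_iff_le hQ).1 (hj ▸ Nat.gcd_dvd_left Q (p ^ k)))

theorem Int.eq_zero_of_forall_pow_dvd {b m : ℤ} (hb : b.natAbs ≠ 1) (h : ∀ k : ℕ, b ^ k ∣ m) :
    m = 0 := by
  by_contra hm
  exact FiniteMultiplicity.not_iff_forall.2 h (Int.finiteMultiplicity_iff.2 ⟨hb, hm⟩)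

section nuInf

variable {p : ℕ} [Fact p.Prime]

theorem nuInf_eq_emultiplicity (m : ℤ) : nuInf p m = emultiplicity (p : ℤ) m := by
  rcases eq_or_ne m 0 with rfl | hm
  · simp [nuInf]
  · rw [nuInf, if_neg hm, padicValInt, padicValNat_eq_emultiplicity (Int.natAbs_ne_zero.2 hm),
      Int.emultiplicity_natAbs]

theorem pow_dvd_iff_le_nuInf {k : ℕ} {m : ℤ} : (p : ℤ) ^ k ∣ m ↔ (k : ℕ∞) ≤ nuInf p m := by
  rw [nuInf_eq_emultiplicity, pow_dvd_iff_le_emultiplicity]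

theorem nuInf_sub_eq_of_pow_dvd_of_not_pow_dvd {k : ℕ} {m i a : ℤ} (hm : (p : ℤ) ^ k ∣ m - i)
    (hi : ¬ (p : ℤ) ^ k ∣ i - a) : nuInf p (m - a) = nuInf p (i - a) := by
  rw [pow_dvd_iff_le_emultiplicity, not_le] at hi
  rw [pow_dvd_iff_le_emultiplicity] at hm
  rw [nuInf_eq_emultiplicity, nuInf_eq_emultiplicity, ← sub_add_sub_cancel m i a]
  exact emultiplicity_add_of_gt (hi.trans_le hm)

end nuInf

section ResidueClass

variable {p : ℕ} {i a : ℤ}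

theorem exists_pow_dvd_sub_of_pow_padicValNat_dvd (hp : p.Prime) {Q : ℕ} (hQ : Q ≠ 0)
    (h : (p : ℤ) ^ padicValNat p Q ∣ a - i) (k : ℕ) :
    ∃ n : ℤ, (Q : ℤ) ∣ n - i ∧ (p : ℤ) ^ k ∣ n - a := by
  refine Int.exists_dvd_sub_and_dvd_sub_of_gcd_dvd (dvd_trans ?_ h)
  rw [Int.gcd, Int.natAbs_pow]
  exact_mod_cast Nat.gcd_pow_dvd_pow_padicValNat hp hQ k

theorem not_forall_nuInf_sub_eq_of_forall_exists_pow_dvd [Fact p.Prime] {Q : ℤ} (hQ : Q ≠ 0)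
    (h : ∀ k : ℕ, ∃ n : ℤ, Q ∣ n - i ∧ (p : ℤ) ^ k ∣ n - a) :
    ¬ ∀ m n : ℤ, Q ∣ m - i → Q ∣ n - i → nuInf p (m - a) = nuInf p (n - a) := by
  intro hconst
  have hdvd : ∀ m, Q ∣ m - i → ∀ k : ℕ, (p : ℤ) ^ k ∣ m - a := by
    intro m hm k
    obtain ⟨n, hn, hnk⟩ := h k
    rw [pow_dvd_iff_le_nuInf] at hnk ⊢
    exact hconst m n hm hn ▸ hnk
  have hp : (p : ℤ).natAbs ≠ 1 := (Fact.out : p.Prime).ne_one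
  have hi := Int.eq_zero_of_forall_pow_dvd hp (hdvd i (by simp))
  have hiQ := Int.eq_zero_of_forall_pow_dvd hp (hdvd (i + Q) (by simp))
  exact hQ (by linarith)

end ResidueClass

/-- For a prime `p`, a positive integer `Q` and integers `i, a`, the following are
equivalent: (1) `p^{ν_p(Q)} ∣ a − i`; (2) `n ↦ ν_p(n − a)` is not constant on the
residue class `n ≡ i (mod Q)`; (3) `ν_p(n − a)` is unbounded on that class. -/
theorem padic_valuation_class_tfae
    (p : ℕ) (hp : Nat.Prime p) (Q : ℕ) (hQ : 0 < Q) (i a : ℤ) :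
    ((p : ℤ) ^ (padicValNat p Q) ∣ (a - i) ↔
      ¬ ∀ m n : ℤ, (Q : ℤ) ∣ (m - i) → (Q : ℤ) ∣ (n - i) →
        nuInf p (m - a) = nuInf p (n - a)) ∧
    ((p : ℤ) ^ (padicValNat p Q) ∣ (a - i) ↔
      ∀ k : ℕ, ∃ n : ℤ, (Q : ℤ) ∣ (n - i) ∧ (p : ℤ) ^ k ∣ (n - a)) := by
  have : Fact p.Prime := ⟨hp⟩
  have hpQ : (p : ℤ) ^ padicValNat p Q ∣ Q := by exact_mod_cast pow_padicValNat_dvd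
  have unbounded_iff : (p : ℤ) ^ padicValNat p Q ∣ a - i ↔
      ∀ k : ℕ, ∃ n : ℤ, (Q : ℤ) ∣ n - i ∧ (p : ℤ) ^ k ∣ n - a := by
    refine ⟨exists_pow_dvd_sub_of_pow_padicValNat_dvd hp hQ.ne', fun h ↦ ?_⟩
    obtain ⟨n, hQn, hpn⟩ := h (padicValNat p Q)
    simpa using dvd_sub (hpQ.trans hQn) hpn
  refine ⟨⟨fun h ↦ not_forall_nuInf_sub_eq_of_forall_exists_pow_dvd (by exact_mod_cast hQ.ne')
    (unbounded_iff.1 h), fun hnonconst ↦ ?_⟩, unbounded_iff⟩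
  by_contra hnd
  refine hnonconst fun m n hm hn ↦ ?_
  have hia : ¬ (p : ℤ) ^ padicValNat p Q ∣ i - a := by rwa [← dvd_neg, neg_sub]
  rw [nuInf_sub_eq_of_pow_dvd_of_not_pow_dvd (hpQ.trans hm) hia,
    nuInf_sub_eq_of_pow_dvd_of_not_pow_dvd (hpQ.trans hn) hia]
end

section
/- Let (p, Q) be either (83, 287) or (397, 132). Then for every integer n ≥ 1: if there exists c ∈ {0, 1, 4, 17} with n ≡ −c (mod Q), then ν_p(T(n)) = ν_p(n + c) + 1; otherwise ν_p(T(n)) = 0. (The four residue classes −0, −1, −4, −17 are pairwise distinct modulo Q, so c is unique when it exists.) -/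
/-!
Let `M` be the companion matrix of the Tribonacci recurrence, so that `M ^ m` moves the state
vector `(T (a + 2), T (a + 1), T a)` forward by `m`. Since `T` has period `Q` modulo `p`, we can
write `M ^ Q = 1 + p B`, and for odd `p` the binomial theorem gives
`M ^ (Q K) ≡ 1 + K (M ^ Q - 1) (mod p ^ (ν_p K + 2))`. Reading off the last coordinate at `a = -c`,
where `T (-c) = 0`, yields `T (Q K - c) ≡ K T (Q - c) (mod p ^ (ν_p K + 2))`, so `ν_p (T (Q - c)) = 1`
gives `ν_p (T (Q K - c)) = ν_p K + 1`. Otherwise `T n ≡ T (n mod Q) (mod p)`, and a finite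
computation in `ZMod p` shows that on `[0, Q)` the sequence vanishes modulo `p` only at the
residues of `-c`.
-/

open Matrix

theorem padicValNat_add_two_le_self {p j : ℕ} [hp : Fact p.Prime] (hp2 : p ≠ 2) (hj : 2 ≤ j) :
    padicValNat p j + 2 ≤ j := by
  have hp3 : 3 ≤ p := lt_of_le_of_ne hp.out.two_le (Ne.symm hp2)
  rcases lt_trichotomy j p with hjp | rfl | hpj
  · rw [padicValNat.eq_zero_of_not_dvd (Nat.not_dvd_of_pos_of_lt (by omega) hjp)]
    omega
  · rw [padicValNat_self]; omega
  · have := padicValNat_add_le_self hpj; omega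

theorem pow_padicValNat_add_two_dvd_choose_mul_pow {p K j : ℕ} [hp : Fact p.Prime] (hp2 : p ≠ 2)
    (hK : K ≠ 0) (hj : 2 ≤ j) : p ^ (padicValNat p K + 2) ∣ K.choose j * p ^ j := by
  rcases lt_or_ge K j with hKj | hjK
  · simp [Nat.choose_eq_zero_of_lt hKj]
  have hC : K.choose j ≠ 0 := (Nat.choose_pos hjK).ne'
  -- `j C(K, j) = K C(K - 1, j - 1)` gives `ν K ≤ ν C(K, j) + ν j`, and `ν j + 2 ≤ j`.
  have hK_dvd : K ∣ K.choose j * j := by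
    obtain ⟨k, rfl⟩ := Nat.exists_eq_succ_of_ne_zero hK
    obtain ⟨i, rfl⟩ := Nat.exists_eq_add_of_le' (by omega : 1 ≤ j)
    exact ⟨k.choose i, (Nat.add_one_mul_choose_eq k i).symm⟩
  have hval : padicValNat p K ≤ padicValNat p (K.choose j) + padicValNat p j := by
    rw [← padicValNat.mul hC (by omega), ← padicValNat_dvd_iff_le (by positivity)]
    exact pow_padicValNat_dvd.trans hK_dvd
  calc p ^ (padicValNat p K + 2) ∣ p ^ (padicValNat p (K.choose j) + j) :=
        pow_dvd_pow p (by have := padicValNat_add_two_le_self (p := p) hp2 hj; omega)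
    _ = p ^ padicValNat p (K.choose j) * p ^ j := pow_add _ _ _
    _ ∣ K.choose j * p ^ j := mul_dvd_mul_right pow_padicValNat_dvd _

theorem pow_padicValNat_add_two_dvd_pow_sub {R : Type*} [Ring R] {p K : ℕ} [Fact p.Prime]
    (hp2 : p ≠ 2) (hK : K ≠ 0) {x : R} (hx : (p : R) ∣ x - 1) :
    (p : R) ^ (padicValNat p K + 2) ∣ x ^ K - 1 - K * (x - 1) := by
  obtain ⟨b, hb⟩ := hx
  obtain ⟨k, rfl⟩ : ∃ k, K = k + 1 := ⟨K - 1, by omega⟩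
  have hx : x = p * b + 1 := by rw [← hb, sub_add_cancel]
  rw [hx, (Commute.one_right _).add_pow, Finset.sum_range_succ', Finset.sum_range_succ']
  simp only [one_pow, mul_one, pow_zero, Nat.choose_zero_right, Nat.cast_one, zero_add, pow_one,
    Nat.choose_one_right, add_sub_cancel_right]
  rw [← (Nat.cast_commute (k + 1) ((p : R) * b)).eq, add_sub_cancel_right]
  refine Finset.dvd_sum fun j _ => ?_
  have hterm : (p * b) ^ (j + 2) * ((k + 1).choose (j + 2) : ℕ) =
      (((k + 1).choose (j + 2) * p ^ (j + 2) : ℕ) : R) * b ^ (j + 2) := by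
    rw [(Nat.cast_commute p b).mul_pow, mul_assoc, ← (Nat.cast_commute _ (b ^ _)).eq]
    push_cast
    rw [← mul_assoc, ← (Nat.cast_commute _ (_ : R)).eq]
  rw [hterm, ← Nat.cast_pow]
  exact (Nat.cast_dvd_cast
    (pow_padicValNat_add_two_dvd_choose_mul_pow hp2 hK (by omega))).mul_right _

theorem padicValInt_eq_of_dvd_sub {p : ℕ} [Fact p.Prime] {x y : ℤ} (hy : y ≠ 0)
    (h : (p : ℤ) ^ (padicValInt p y + 1) ∣ x - y) : padicValInt p x = padicValInt p y := by
  have hy_dvd : (p : ℤ) ^ padicValInt p y ∣ y := padicValInt_dvd y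
  have hy_not : ¬ (p : ℤ) ^ (padicValInt p y + 1) ∣ y := by
    rw [padicValInt_dvd_iff]; omega
  have hx_not : ¬ (p : ℤ) ^ (padicValInt p y + 1) ∣ x := fun hx =>
    hy_not (by simpa using dvd_sub hx h)
  have hx_dvd : (p : ℤ) ^ padicValInt p y ∣ x := by
    simpa using dvd_add ((pow_dvd_pow _ (Nat.le_succ _)).trans h) hy_dvd
  rw [padicValInt_dvd_iff] at hx_dvd hx_not
  omega

theorem padicValInt_eq_one {p : ℕ} [Fact p.Prime] {x : ℤ} (h : (p : ℤ) ∣ x)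
    (h2 : ¬ (p : ℤ) ^ 2 ∣ x) : padicValInt p x = 1 := by
  rw [← pow_one (p : ℤ), padicValInt_dvd_iff] at h
  rw [padicValInt_dvd_iff] at h2
  omega

theorem padicValInt_eq_zero_of_periodic {f : ℤ → ℤ} {p Q : ℕ} (hQ : Q ≠ 0)
    (hper : Function.Periodic (fun n => (f n : ZMod p)) Q) {S : Set ℤ}
    (hzero : ∀ r < Q, (f r : ZMod p) = 0 → ∃ c ∈ S, (Q : ℤ) ∣ r + c) {n : ℤ}
    (hn : ∀ c ∈ S, ¬ (Q : ℤ) ∣ n + c) : padicValInt p (f n) = 0 := by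
  refine padicValInt.eq_zero_of_not_dvd fun hdvd => ?_
  obtain ⟨r, hr⟩ : ∃ r : ℕ, (r : ℤ) = n % Q :=
    ⟨(n % Q).toNat, Int.toNat_of_nonneg (Int.emod_nonneg _ (by omega))⟩
  have hrQ : r < Q := by have := Int.emod_lt_of_pos n (by omega : (0 : ℤ) < Q); omega
  have hfr : (f r : ZMod p) = 0 := by
    have hshift := hper.sub_int_mul_eq (x := n) (n / Q)
    rw [hr, Int.emod_def, mul_comm]
    exact hshift.trans <| (ZMod.intCast_zmod_eq_zero_iff_dvd _ _).2 hdvd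
  obtain ⟨c, hc, hQ_dvd⟩ := hzero r hrQ hfr
  refine hn c hc ?_
  rw [show n + c = r + c + Q * (n / Q) by rw [hr, Int.emod_def]; ring]
  exact dvd_add hQ_dvd (dvd_mul_right _ _)

theorem Matrix.natCast_dvd_of_map_intCast_eq_zero {n : Type*} [Fintype n] [DecidableEq n] {p : ℕ}
    {A : Matrix n n ℤ} (hA : A.map (Int.cast : ℤ → ZMod p) = 0) : (p : Matrix n n ℤ) ∣ A := by
  have hdvd i j : (p : ℤ) ∣ A i j :=
    (ZMod.intCast_zmod_eq_zero_iff_dvd _ _).1 (congrFun (congrFun hA i) j)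
  choose B hB using hdvd
  refine ⟨Matrix.of B, ?_⟩
  ext i j
  simp [← diagonal_natCast, hB]

def IsTribonacciRec {R : Type*} [Add R] (u : ℤ → R) : Prop :=
  ∀ n, u (n + 3) = u (n + 2) + u (n + 1) + u n

def tribMatrix (R : Type*) [Semiring R] : Matrix (Fin 3) (Fin 3) R := !![1, 1, 1; 1, 0, 0; 0, 1, 0]

def tribState {R : Type*} (u : ℤ → R) (a : ℤ) : Fin 3 → R := ![u (a + 2), u (a + 1), u a]

namespace IsTribonacciRec

variable {R : Type*}

theorem intCast [AddGroupWithOne R] {u : ℤ → ℤ} (hu : IsTribonacciRec u) :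
    IsTribonacciRec (fun n => (u n : R)) := fun n => by
  simp only [hu n, Int.cast_add]

theorem comp_add_right [Add R] {u : ℤ → R} (hu : IsTribonacciRec u) (a : ℤ) :
    IsTribonacciRec (fun n => u (n + a)) := fun n => by
  simpa only [add_right_comm _ a] using hu (n + a)

theorem ext [Add R] [IsLeftCancelAdd R] {u v : ℤ → R} (hu : IsTribonacciRec u)
    (hv : IsTribonacciRec v) (h0 : u 0 = v 0) (h1 : u 1 = v 1) (h2 : u 2 = v 2) : u = v := by
  let P a := u a = v a ∧ u (a + 1) = v (a + 1) ∧ u (a + 2) = v (a + 2)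
  have step : ∀ a, P a ↔ P (a + 1) := fun a => by
    simp only [P, add_assoc, show (1 + 1 : ℤ) = 2 by norm_num, show (1 + 2 : ℤ) = 3 by norm_num,
      hu a, hv a]
    constructor
    · rintro ⟨e0, e1, e2⟩; exact ⟨e1, e2, by rw [e0, e1, e2]⟩
    · rintro ⟨e1, e2, e3⟩; rw [e1, e2] at e3; exact ⟨add_left_cancel e3, e1, e2⟩
  suffices H : ∀ a, P a from funext fun a => (H a).1
  intro a
  induction a using Int.induction_on with
  | zero => exact ⟨h0, by simpa using h1, by simpa using h2⟩
  | succ i ih => exact (step i).1 ih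
  | pred i ih => exact (step _).2 (by simpa using ih)

theorem mulVec_tribState [Semiring R] {u : ℤ → R} (hu : IsTribonacciRec u) (a : ℤ) :
    tribMatrix R *ᵥ tribState u a = tribState u (a + 1) := by
  ext i
  fin_cases i <;>
    simp [tribMatrix, tribState, mulVec, dotProduct, Fin.sum_univ_three, add_assoc, hu a]

theorem pow_mulVec_tribState [Semiring R] {u : ℤ → R} (hu : IsTribonacciRec u) (m : ℕ) (a : ℤ) :
    tribMatrix R ^ m *ᵥ tribState u a = tribState u (a + m) := by
  induction m with
  | zero => simp
  | succ m ih => rw [pow_succ', ← mulVec_mulVec, ih, hu.mulVec_tribState, Nat.cast_succ, add_assoc]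

theorem tribMatrix_pow_eq_one [Ring R] {u : ℤ → R} (hu : IsTribonacciRec u) (h0 : u 0 = 0)
    (h1 : u 1 = 1) (h2 : u 2 = 1) {Q : ℕ} (hper : Function.Periodic u Q) :
    tribMatrix R ^ Q = 1 := by
  have hm1 : u (-1) = 0 := by simpa [h0, h1, h2] using hu (-1)
  have hm2 : u (-2) = 1 := by simpa [h0, h1, hm1, eq_comm] using hu (-2)
  have hfix : ∀ a, tribMatrix R ^ Q *ᵥ tribState u a = tribState u a := fun a => by
    rw [hu.pow_mulVec_tribState]
    simp only [tribState, add_right_comm a (Q : ℤ), hper (a + 2), hper (a + 1), hper a]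
  have e0 : Pi.single 0 1 = tribState u (-1) := by
    ext i; fin_cases i <;> simp [tribState, h0, h1, hm1]
  have e1 : Pi.single 1 1 = tribState u 0 - tribState u (-1) := by
    ext i; fin_cases i <;> simp [tribState, h0, h1, h2, hm1]
  have e2 : Pi.single 2 1 = tribState u (-2) := by
    ext i; fin_cases i <;> simp [tribState, h0, hm1, hm2]
  refine ext_of_mulVec_single fun j => ?_
  rw [one_mulVec]
  fin_cases j
  · simp only [Fin.zero_eta, e0, hfix]
  · simp only [Fin.mk_one, e1, mulVec_sub, hfix]
  · simp only [Fin.reduceFinMk, e2, hfix]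

end IsTribonacciRec

theorem tribMatrix_map_intCast (R : Type*) [Ring R] :
    (tribMatrix ℤ).map (Int.cast : ℤ → R) = tribMatrix R := by
  ext i j; fin_cases i <;> fin_cases j <;> simp [tribMatrix]

theorem IsTribonacciRec.natCast_dvd_tribMatrix_pow_sub_one {T : ℤ → ℤ} (hT : IsTribonacciRec T)
    (h0 : T 0 = 0) (h1 : T 1 = 1) (h2 : T 2 = 1) {p Q : ℕ}
    (hper : Function.Periodic (fun n => (T n : ZMod p)) Q) :
    (p : Matrix (Fin 3) (Fin 3) ℤ) ∣ tribMatrix ℤ ^ Q - 1 := by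
  apply Matrix.natCast_dvd_of_map_intCast_eq_zero
  have := (hT.intCast (R := ZMod p)).tribMatrix_pow_eq_one (by simp [h0]) (by simp [h1])
    (by simp [h2]) hper
  have hmap := map_sub (Int.castRingHom (ZMod p)).mapMatrix (tribMatrix ℤ ^ Q) 1
  simp only [map_pow, map_one, RingHom.mapMatrix_apply, Int.coe_castRingHom] at hmap
  simp only [hmap, tribMatrix_map_intCast, this, sub_self]

theorem IsTribonacciRec.pow_padicValNat_add_two_dvd {T : ℤ → ℤ} (hT : IsTribonacciRec T)
    {p Q K : ℕ} [Fact p.Prime] (hp2 : p ≠ 2) (hK : K ≠ 0)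
    (hM : (p : Matrix (Fin 3) (Fin 3) ℤ) ∣ tribMatrix ℤ ^ Q - 1) (a : ℤ) :
    (p : ℤ) ^ (padicValNat p K + 2) ∣ T (a + Q * K) - T a - K * (T (a + Q) - T a) := by
  obtain ⟨C, hC⟩ := pow_padicValNat_add_two_dvd_pow_sub hp2 hK hM
  have h := congrArg (· *ᵥ tribState T a) hC
  rw [← Nat.cast_pow] at h
  simp only [sub_mulVec, ← pow_mul, one_mulVec, ← mulVec_mulVec, natCast_mulVec,
    hT.pow_mulVec_tribState] at h
  exact ⟨(C *ᵥ tribState T a) 2, by simpa [tribState] using congrFun h 2⟩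

theorem IsTribonacciRec.padicValInt_eq_add_one {T : ℤ → ℤ} (hT : IsTribonacciRec T)
    {p Q : ℕ} [Fact p.Prime] (hp2 : p ≠ 2) (hpQ : ¬ p ∣ Q)
    (hM : (p : Matrix (Fin 3) (Fin 3) ℤ) ∣ tribMatrix ℤ ^ Q - 1) {c n : ℤ} (hc : T (-c) = 0)
    (hQc : padicValInt p (T (Q - c)) = 1) (hdvd : (Q : ℤ) ∣ n + c) (hpos : 0 < n + c) :
    padicValInt p (T n) = padicValInt p (n + c) + 1 := by
  obtain ⟨k, hk⟩ := hdvd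
  lift k to ℕ using by nlinarith
  have hk0 : (k : ℤ) ≠ 0 := by rintro h; rw [h, mul_zero] at hk; omega
  have hQ0 : (Q : ℤ) ≠ 0 := by rintro h; rw [h, zero_mul] at hk; omega
  have hQc0 : T (Q - c) ≠ 0 := fun h => by simp [h] at hQc
  have hval_k : padicValInt p (n + c) = padicValNat p k := by
    rw [hk, padicValInt.mul hQ0 hk0, padicValInt.of_nat, padicValInt.of_nat,
      padicValNat.eq_zero_of_not_dvd hpQ, zero_add]
  have hval_y : padicValInt p (k * T (Q - c)) = padicValNat p k + 1 := by
    rw [padicValInt.mul hk0 hQc0, hQc, padicValInt.of_nat]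
  have hcong := hT.pow_padicValNat_add_two_dvd hp2 (by exact_mod_cast hk0) hM (-c)
  rw [show -c + Q * k = n by omega, neg_add_eq_sub, hc, sub_zero, sub_zero] at hcong
  rw [hval_k, ← hval_y]
  exact padicValInt_eq_of_dvd_sub (mul_ne_zero hk0 hQc0) (hval_y ▸ hcong)

-- A model of `m ↦ (T m, T (m + 1), T (m + 2))` that the kernel can evaluate in `ZMod N`.
def tribTriple (R : Type*) [AddMonoidWithOne R] : ℕ → R × R × R
  | 0 => (0, 1, 1)
  | m + 1 => let t := tribTriple R m; (t.2.1, t.2.2, t.2.2 + t.2.1 + t.1)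

theorem IsTribonacciRec.tribTriple_eq {T : ℤ → ℤ} (hT : IsTribonacciRec T) (h0 : T 0 = 0)
    (h1 : T 1 = 1) (h2 : T 2 = 1) (R : Type*) [AddGroupWithOne R] (m : ℕ) :
    tribTriple R m = ((T m : R), (T (m + 1) : R), (T (m + 2) : R)) := by
  induction m with
  | zero => simp [tribTriple, h0, h1, h2]
  | succ m ih =>
    rw [tribTriple, ih]
    simp only [Nat.cast_succ, add_assoc, show (1 + 1 : ℤ) = 2 by norm_num,
      show (1 + 2 : ℤ) = 3 by norm_num, hT m, Int.cast_add]

theorem IsTribonacciRec.periodic_of_tribTriple {T : ℤ → ℤ} (hT : IsTribonacciRec T)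
    (h0 : T 0 = 0) (h1 : T 1 = 1) (h2 : T 2 = 1) {R : Type*} [AddGroupWithOne R] {Q : ℕ}
    (hQ : tribTriple R Q = (0, 1, 1)) : Function.Periodic (fun n => (T n : R)) Q := by
  rw [hT.tribTriple_eq h0 h1 h2, Prod.mk.injEq, Prod.mk.injEq] at hQ
  refine congrFun ((hT.intCast.comp_add_right _).ext hT.intCast ?_ ?_ ?_) <;>
    simp [h0, h1, h2, hQ, add_comm _ (Q : ℤ)]

-- These are the zeros of `T`; they give the residues `-c` of the theorem.
theorem IsTribonacciRec.neg_zeros {T : ℤ → ℤ} (hT : IsTribonacciRec T) (h0 : T 0 = 0)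
    (h1 : T 1 = 1) (h2 : T 2 = 1) : T (-1) = 0 ∧ T (-4) = 0 ∧ T (-17) = 0 := by
  have back a : T a = T (a + 3) - T (a + 2) - T (a + 1) := by rw [hT a]; ring
  have m1 : T (-1) = 0 := by rw [back]; norm_num [h0, h1, h2]
  have m2 : T (-2) = 1 := by rw [back]; norm_num [h0, h1, m1]
  have m3 : T (-3) = -1 := by rw [back]; norm_num [h0, m1, m2]
  have m4 : T (-4) = 0 := by rw [back]; norm_num [m1, m2, m3]
  have m5 : T (-5) = 2 := by rw [back]; norm_num [m2, m3, m4]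
  have m6 : T (-6) = -3 := by rw [back]; norm_num [m3, m4, m5]
  have m7 : T (-7) = 1 := by rw [back]; norm_num [m4, m5, m6]
  have m8 : T (-8) = 4 := by rw [back]; norm_num [m5, m6, m7]
  have m9 : T (-9) = -8 := by rw [back]; norm_num [m6, m7, m8]
  have m10 : T (-10) = 5 := by rw [back]; norm_num [m7, m8, m9]
  have m11 : T (-11) = 7 := by rw [back]; norm_num [m8, m9, m10]
  have m12 : T (-12) = -20 := by rw [back]; norm_num [m9, m10, m11]
  have m13 : T (-13) = 18 := by rw [back]; norm_num [m10, m11, m12]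
  have m14 : T (-14) = 9 := by rw [back]; norm_num [m11, m12, m13]
  have m15 : T (-15) = -47 := by rw [back]; norm_num [m12, m13, m14]
  have m16 : T (-16) = 56 := by rw [back]; norm_num [m13, m14, m15]
  have m17 : T (-17) = 0 := by rw [back]; norm_num [m14, m15, m16]
  exact ⟨m1, m4, m17⟩

theorem IsTribonacciRec.padicValInt_of_certificate {T : ℤ → ℤ} (hT : IsTribonacciRec T)
    (h0 : T 0 = 0) (h1 : T 1 = 1) (h2 : T 2 = 1) {p Q : ℕ} (hp : p.Prime) (hp2 : p ≠ 2)
    (hpQ : ¬ p ∣ Q) (hQ : 17 ≤ Q) (hperiod : tribTriple (ZMod p) Q = (0, 1, 1))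
    (hsq : ∀ c ∈ [0, 1, 4, 17], (tribTriple (ZMod (p ^ 2)) (Q - c)).1 ≠ 0)
    (hzero : ∀ r < Q, (tribTriple (ZMod p) r).1 = 0 → r ∈ [0, Q - 1, Q - 4, Q - 17]) :
    ∀ n : ℤ, 1 ≤ n →
      (∀ c : ℤ, c ∈ ({0, 1, 4, 17} : Set ℤ) → (Q : ℤ) ∣ (n + c) →
        padicValInt p (T n) = padicValInt p (n + c) + 1) ∧
      ((∀ c : ℤ, c ∈ ({0, 1, 4, 17} : Set ℤ) → ¬ (Q : ℤ) ∣ (n + c)) →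
        padicValInt p (T n) = 0) := by
  have : Fact p.Prime := ⟨hp⟩
  have hcast := hT.tribTriple_eq h0 h1 h2
  have hper := hT.periodic_of_tribTriple h0 h1 h2 hperiod
  have hM := hT.natCast_dvd_tribMatrix_pow_sub_one h0 h1 h2 hper
  obtain ⟨hT_neg1, hT_neg4, hT_neg17⟩ := hT.neg_zeros h0 h1 h2
  intro n hn
  constructor
  · intro c hc hdvd
    obtain ⟨d, hd, rfl⟩ : ∃ d : ℕ, d ∈ [0, 1, 4, 17] ∧ c = d := by
      rcases hc with rfl | rfl | rfl | rfl <;> simp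
    have hd' : d = 0 ∨ d = 1 ∨ d = 4 ∨ d = 17 := by simpa using hd
    have hTd : T (-d) = 0 := by rcases hd' with rfl | rfl | rfl | rfl <;> simpa
    have hdQ : d ≤ Q := by omega
    have hval : padicValInt p (T (Q - d)) = 1 := by
      refine padicValInt_eq_one ?_ ?_
      · rw [← ZMod.intCast_zmod_eq_zero_iff_dvd, ← neg_add_eq_sub]
        exact (hper (-d)).trans (by simp [hTd])
      · have := hsq d hd
        rw [hcast, Ne, ZMod.intCast_zmod_eq_zero_iff_dvd, Nat.cast_sub hdQ] at this
        exact_mod_cast this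
    exact hT.padicValInt_eq_add_one hp2 hpQ hM hTd hval hdvd (by omega)
  · refine fun hnc => padicValInt_eq_zero_of_periodic (by omega) hper (fun r hr hTr => ?_) hnc
    have hr' := hzero r hr (by rw [hcast]; exact hTr)
    simp only [List.mem_cons, List.not_mem_nil, or_false] at hr'
    rcases hr' with rfl | rfl | rfl | rfl
    · exact ⟨0, by simp, by simp⟩
    · exact ⟨1, by simp, ⟨1, by omega⟩⟩
    · exact ⟨4, by simp, ⟨1, by omega⟩⟩
    · exact ⟨17, by simp, ⟨1, by omega⟩⟩

/-- For `(p, Q) ∈ {(83, 287), (397, 132)}` and every integer `n ≥ 1`: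
if `n ≡ −c (mod Q)` for some `c ∈ {0, 1, 4, 17}` then `ν_p(T(n)) = ν_p(n + c) + 1`,
and otherwise `ν_p(T(n)) = 0`. -/
theorem marquesLengyel_holds_83_397
    (T : ℤ → ℤ)
    (hT0 : T 0 = 0) (hT1 : T 1 = 1) (hT2 : T 2 = 1)
    (hTrec : ∀ n : ℤ, T (n + 3) = T (n + 2) + T (n + 1) + T n)
    (p Q : ℕ) (hpQ : (p = 83 ∧ Q = 287) ∨ (p = 397 ∧ Q = 132)) :
    ∀ n : ℤ, 1 ≤ n →
      (∀ c : ℤ, c ∈ ({0, 1, 4, 17} : Set ℤ) → (Q : ℤ) ∣ (n + c) →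
        padicValInt p (T n) = padicValInt p (n + c) + 1) ∧
      ((∀ c : ℤ, c ∈ ({0, 1, 4, 17} : Set ℤ) → ¬ (Q : ℤ) ∣ (n + c)) →
        padicValInt p (T n) = 0) := by
  set_option maxRecDepth 100000 in
  rcases hpQ with ⟨rfl, rfl⟩ | ⟨rfl, rfl⟩
  · exact IsTribonacciRec.padicValInt_of_certificate hTrec hT0 hT1 hT2 (p := 83) (Q := 287)
      (by norm_num) (by norm_num) (by norm_num) (by norm_num) (by decide) (by decide) (by decide)
  · exact IsTribonacciRec.padicValInt_of_certificate hTrec hT0 hT1 hT2 (p := 397) (Q := 132)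
      (by norm_num) (by norm_num) (by norm_num) (by norm_num) (by decide) (by decide) (by decide)
end

section
/- Let p be a prime with p ∉ {2, 11} and let N = N_p. Assume that for every ℓ ∈ {0, 1, …, N−1} with p ∣ T(ℓ), one has both T(ℓ+N) ≢ T(ℓ) (mod p²) and ℓ ≡ a (mod N) for some a ∈ {0, −1, −4, −17}. Then the Marques–Lengyel property holds at p. -/
/-!
Write `v n = (T (n + 2), T (n + 1), T n)` and `U` for the companion matrix, so that
`v (n + k) = U ^ k v n`. As `v 0, v 1, v 2` form a basis of `ℤ³`, periodicity of `T` modulo `p`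
says `W = U ^ N ≡ 1 (mod p)`. For odd `p` the binomial theorem gives
`W ^ k ≡ 1 + k (W - 1) (mod p ^ (ν_p k + 2))`, hence
`T (x + N k) - T x ≡ k (T (x + N) - T x) (mod p ^ (ν_p k + 2))`.
If `p ∤ T i`, then `p ∤ T n` on the whole class of `i` modulo `N`. Otherwise the class contains a
zero `a ∈ {0, -1, -4, -17}` of `T` with `ν_p (T (a + N) - T a) = 1` (the case `k = 2` of the
congruence makes `T (x + N) - T x` periodic modulo `p ^ 2`, so the hypothesis at `i` transfers to
`a`), and the congruence yields `ν_p (T (a + N k)) = ν_p k + 1 = ν_p (n - a) - ν_p N + 1`.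
-/

/-- The Marques–Lengyel property at a prime `p`, for a sequence `T : ℤ → ℤ`. -/
def MarquesLengyelProp (p : ℕ) (T : ℤ → ℤ) : Prop :=
  ∃ Q : ℕ, 0 < Q ∧ ∀ i : ℕ, i < Q →
    (∃ κ : ℕ, {n : ℤ | (Q : ℤ) ∣ (n - i) ∧ padicValInt p (T n) ≠ κ}.Finite) ∨
    (∃ a κ : ℤ, ∃ μ : ℕ, 0 < μ ∧ (p : ℤ) ^ (padicValNat p Q) ∣ (a - i) ∧
      {n : ℤ | (Q : ℤ) ∣ (n - i) ∧
        (padicValInt p (T n) : ℤ) ≠ κ + μ * padicValInt p (n - a)}.Finite)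

open Polynomial Matrix

section OneAddPow

variable {p : ℕ}

theorem pow_add_two_dvd_choose_mul_pow (hp : p.Prime) (hp2 : p ≠ 2) {j m : ℕ} (hj : 1 ≤ j)
    (hm : 2 ≤ m) (hmp : m ≤ p) : p ^ (j + 2) ∣ p.choose m * p ^ (j * m) := by
  rcases hmp.lt_or_eq with hlt | rfl
  · calc p ^ (j + 2) ∣ p * p ^ (j * m) := by
          rw [← pow_succ']; exact pow_dvd_pow _ (by nlinarith)
      _ ∣ _ := mul_dvd_mul_right (hp.dvd_choose_self (by omega) hlt) _
  · have : 3 ≤ m := by have := hp.two_le; omega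
    rw [Nat.choose_self, one_mul]
    exact pow_dvd_pow _ (by nlinarith)

variable {R : Type*} [CommRing R]

theorem pow_add_two_dvd_one_add_pow_prime_sub (hp : p.Prime) (hp2 : p ≠ 2) {j : ℕ} (hj : 1 ≤ j)
    (d : R) : (p : R) ^ (j + 2) ∣ (1 + p ^ j * d) ^ p - 1 - p ^ (j + 1) * d := by
  have hterm : ∀ m ∈ Finset.Ico 2 (p + 1),
      (p : R) ^ (j + 2) ∣ (p ^ j * d) ^ m * 1 ^ (p - m) * p.choose m := by
    intro m hm
    obtain ⟨hm2, hmp⟩ := Finset.mem_Ico.1 hm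
    have h := (Nat.cast_dvd_cast (α := R)
      (pow_add_two_dvd_choose_mul_pow hp hp2 hj hm2 (by omega))).mul_right (d ^ m)
    push_cast at h
    convert h using 1
    ring
  rw [add_comm (1 : R), add_pow, Finset.range_eq_Ico, Finset.sum_eq_sum_Ico_succ_bot (by omega),
    Finset.sum_eq_sum_Ico_succ_bot (by have := hp.two_le; omega)]
  convert Finset.dvd_sum hterm using 1
  simp only [zero_add, pow_zero, pow_one, one_pow, Nat.choose_zero_right, Nat.choose_one_right,
    Nat.cast_one, mul_one, tsub_zero]
  ring

theorem exists_one_add_mul_pow_prime_pow (hp : p.Prime) (hp2 : p ≠ 2) (b : R) (t : ℕ) :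
    ∃ c : R, (1 + p * b) ^ p ^ t = 1 + p ^ (t + 1) * (b + p * c) := by
  induction t with
  | zero => exact ⟨0, by simp⟩
  | succ t ih =>
    obtain ⟨c, hc⟩ := ih
    obtain ⟨e, he⟩ := pow_add_two_dvd_one_add_pow_prime_sub hp hp2 (j := t + 1) (by omega)
      (b + p * c)
    refine ⟨c + e, ?_⟩
    rw [pow_succ, pow_mul, hc]
    linear_combination he

theorem pow_padicValNat_add_two_dvd_one_add_mul_pow_sub (hp : p.Prime) (hp2 : p ≠ 2) (b : R)
    (k : ℕ) : (p : R) ^ (padicValNat p k + 2) ∣ (1 + p * b) ^ k - 1 - k * (p * b) := by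
  have : Fact p.Prime := ⟨hp⟩
  set t := padicValNat p k
  -- with `k = p ^ t * m`, raise to the power `p ^ t` first, then to the power `m`
  obtain ⟨m, hm⟩ := pow_padicValNat_dvd (p := p) (n := k)
  obtain ⟨c, hc⟩ := exists_one_add_mul_pow_prime_pow hp hp2 b t
  obtain ⟨e, he⟩ := sq_dvd_add_pow_sub_sub ((p : R) ^ (t + 1) * (b + p * c)) 1 m
  refine ⟨p ^ t * (b + p * c) ^ 2 * e + m * c, ?_⟩
  rw [hm, pow_mul, hc]
  push_cast
  linear_combination he

theorem pow_padicValNat_add_two_dvd_pow_sub_one_sub {S : Type*} [Ring S] (hp : p.Prime)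
    (hp2 : p ≠ 2) {w b : S} (hw : w = 1 + p * b) (k : ℕ) :
    (p : S) ^ (padicValNat p k + 2) ∣ w ^ k - 1 - k * (w - 1) := by
  -- the commutative case in `ℤ[X]`, evaluated at `b`
  obtain ⟨E, hE⟩ := pow_padicValNat_add_two_dvd_one_add_mul_pow_sub (R := ℤ[X]) hp hp2 X k
  refine ⟨aeval b E, ?_⟩
  simpa [hw] using congrArg (aeval b) hE

end OneAddPow

section Valuations

variable {p : ℕ}

theorem dvd_apply_add_mul_sub_apply {f : ℤ → ℤ} {m c : ℤ} (h : ∀ x, m ∣ f (x + c) - f x)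
    (x k : ℤ) : m ∣ f (x + c * k) - f x := by
  have hper : Function.Periodic (fun x => f x % m) c := fun x => (Int.modEq_iff_dvd.2 (h x)).symm
  rw [mul_comm]
  exact Int.modEq_iff_dvd.1 (hper.int_mul k x).symm

theorem padicValInt_eq_of_dvd_of_not_dvd [Fact p.Prime] {z : ℤ} {v : ℕ}
    (h : (p : ℤ) ^ v ∣ z) (h' : ¬(p : ℤ) ^ (v + 1) ∣ z) : padicValInt p z = v := by
  rw [padicValInt_dvd_iff] at h h'
  omega

theorem padicValInt_add_eq_of_pow_dvd [Fact p.Prime] {a e : ℤ} (ha : a ≠ 0)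
    (he : (p : ℤ) ^ (padicValInt p a + 1) ∣ e) : padicValInt p (a + e) = padicValInt p a := by
  have hna : ¬(p : ℤ) ^ (padicValInt p a + 1) ∣ a := by rw [padicValInt_dvd_iff]; omega
  refine padicValInt_eq_of_dvd_of_not_dvd
    (dvd_add (padicValInt_dvd a) ((pow_dvd_pow _ (by omega)).trans he)) fun h => hna ?_
  simpa using dvd_sub h he

end Valuations

structure IsTribonacci_s17 (T : ℤ → ℤ) : Prop where
  zero : T 0 = 0
  one : T 1 = 1
  two : T 2 = 1
  recurrence : ∀ n, T (n + 3) = T (n + 2) + T (n + 1) + T n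

section Tribonacci

variable {T : ℤ → ℤ}

def tribonacciBackward (s : ℤ × ℤ × ℤ) : ℤ × ℤ × ℤ := (s.2.2 - s.2.1 - s.1, s.1, s.2.1)

theorem tribonacciBackward_iterate (hrec : ∀ n, T (n + 3) = T (n + 2) + T (n + 1) + T n)
    (m : ℕ) : tribonacciBackward^[m] (T 0, T 1, T 2) = (T (-m), T (1 - m), T (2 - m)) := by
  induction m with
  | zero => simp
  | succ m ih =>
    rw [Function.iterate_succ_apply', ih, tribonacciBackward]
    have h := hrec (-(m + 1))
    push_cast
    ring_nf at h ⊢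
    simp only [Prod.mk.injEq, and_true]
    linarith

theorem IsTribonacci_s17.apply_eq_zero (hT : IsTribonacci_s17 T) {a : ℤ}
    (ha : a ∈ ({0, -1, -4, -17} : Set ℤ)) : T a = 0 := by
  have h (m : ℕ) := congrArg Prod.fst (tribonacciBackward_iterate hT.recurrence m)
  simp only [hT.zero, hT.one, hT.two] at h
  rcases ha with rfl | rfl | rfl | rfl
  exacts [hT.zero, (h 1).symm.trans (by decide), (h 4).symm.trans (by decide),
    (h 17).symm.trans (by decide)]

def tribonacciVec (T : ℤ → ℤ) (n : ℤ) : Fin 3 → ℤ := ![T (n + 2), T (n + 1), T n]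

def tribonacciMatrix : Matrix (Fin 3) (Fin 3) ℤ := !![1, 1, 1; 1, 0, 0; 0, 1, 0]

theorem tribonacciMatrix_mulVec (hrec : ∀ n, T (n + 3) = T (n + 2) + T (n + 1) + T n) (n : ℤ) :
    tribonacciMatrix *ᵥ tribonacciVec T n = tribonacciVec T (n + 1) := by
  ext i
  fin_cases i <;> simp [tribonacciMatrix, tribonacciVec, add_assoc, hrec]

theorem tribonacciMatrix_pow_mulVec (hrec : ∀ n, T (n + 3) = T (n + 2) + T (n + 1) + T n)
    (n : ℤ) (k : ℕ) : tribonacciMatrix ^ k *ᵥ tribonacciVec T n = tribonacciVec T (n + k) := by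
  induction k with
  | zero => simp
  | succ k ih =>
    rw [pow_succ', ← Matrix.mulVec_mulVec, ih, tribonacciMatrix_mulVec hrec]
    push_cast
    ring_nf

namespace IsTribonacci_s17

variable {p N : ℕ}

theorem exists_tribonacciMatrix_pow_eq_one_add (hT : IsTribonacci_s17 T)
    (hper : ∀ n : ℤ, (p : ℤ) ∣ T (n + N) - T n) :
    ∃ B, tribonacciMatrix ^ N = 1 + (p : Matrix (Fin 3) (Fin 3) ℤ) * B := by
  have hT3 : T 3 = 2 := by
    have := hT.recurrence 0; norm_num [hT.zero, hT.one, hT.two] at this; linarith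
  have hT4 : T 4 = 4 := by
    have := hT.recurrence 1; norm_num [hT.one, hT.two, hT3] at this; linarith
  -- `P` has columns `v 0, v 1, v 2` and inverse `Q`, so `U ^ N - 1 = (U ^ N P - P) Q`.
  let P := Matrix.of fun i (j : Fin 3) => tribonacciVec T j i
  let Q : Matrix (Fin 3) (Fin 3) ℤ := !![-1, 2, 0; -1, 1, 2; 1, -1, -1]
  have hPQ : P * Q = 1 := by
    have hP : P = !![1, 2, 4; 1, 1, 2; 0, 1, 1] := by
      ext i j
      fin_cases i <;> fin_cases j <;> simp [P, tribonacciVec, hT.zero, hT.one, hT.two, hT3, hT4]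
    rw [hP]; decide
  have hdvdP (i j : Fin 3) : (p : ℤ) ∣ (tribonacciMatrix ^ N * P - P) i j := by
    have h : (tribonacciMatrix ^ N * P) i j = tribonacciVec T (j + N) i := by
      rw [← tribonacciMatrix_pow_mulVec hT.recurrence]; rfl
    rw [Matrix.sub_apply, h]
    fin_cases i <;> simpa [P, tribonacciVec, add_right_comm _ (N : ℤ)] using hper _
  have hdvd (i j : Fin 3) : (p : ℤ) ∣ (tribonacciMatrix ^ N - 1) i j := by
    have h : tribonacciMatrix ^ N - 1 = (tribonacciMatrix ^ N * P - P) * Q := by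
      rw [sub_mul, mul_assoc, hPQ, mul_one]
    rw [h, Matrix.mul_apply]
    exact Finset.dvd_sum fun k _ => (hdvdP i k).mul_right _
  refine ⟨Matrix.of fun i j => (tribonacciMatrix ^ N - 1) i j / p, ?_⟩
  rw [← nsmul_eq_mul, ← sub_eq_iff_eq_add']
  ext i j
  simpa using (Int.mul_ediv_cancel' (hdvd i j)).symm

theorem pow_padicValNat_add_two_dvd_sub_sub (hT : IsTribonacci_s17 T) (hp : p.Prime) (hp2 : p ≠ 2)
    (hper : ∀ n : ℤ, (p : ℤ) ∣ T (n + N) - T n) (x : ℤ) (k : ℕ) :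
    (p : ℤ) ^ (padicValNat p k + 2) ∣ T (x + N * k) - T x - k * (T (x + N) - T x) := by
  obtain ⟨B, hB⟩ := hT.exists_tribonacciMatrix_pow_eq_one_add hper
  obtain ⟨E, hE⟩ := pow_padicValNat_add_two_dvd_pow_sub_one_sub hp hp2 hB k
  refine ⟨(E *ᵥ tribonacciVec T x) 2, ?_⟩
  have h := congrArg (fun M => (M *ᵥ tribonacciVec T x) 2) hE
  simp only [← pow_mul, ← Nat.cast_pow, Matrix.sub_mulVec, Matrix.one_mulVec,
    ← Matrix.mulVec_mulVec, Matrix.natCast_mulVec, tribonacciMatrix_pow_mulVec hT.recurrence,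
    Pi.sub_apply, Pi.smul_apply, smul_eq_mul] at h
  simpa [tribonacciVec] using h

theorem sq_dvd_shift_sub_sub (hT : IsTribonacci_s17 T) (hp : p.Prime) (hp2 : p ≠ 2)
    (hper : ∀ n : ℤ, (p : ℤ) ∣ T (n + N) - T n) (x k : ℤ) :
    (p : ℤ) ^ 2 ∣ (T (x + N * k + N) - T (x + N * k)) - (T (x + N) - T x) := by
  refine dvd_apply_add_mul_sub_apply (f := fun y => T (y + N) - T y) (fun y => ?_) x k
  have h := hT.pow_padicValNat_add_two_dvd_sub_sub hp hp2 hper y 2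
  have h2 : padicValNat p 2 = 0 :=
    padicValNat.eq_zero_of_not_dvd fun h => hp2 ((Nat.prime_dvd_prime_iff_eq hp Nat.prime_two).1 h)
  rw [h2] at h
  convert h using 1
  push_cast
  ring_nf

theorem padicValInt_add_mul_natCast_sub (hT : IsTribonacci_s17 T) (hp : p.Prime) (hp2 : p ≠ 2)
    (hper : ∀ n : ℤ, (p : ℤ) ∣ T (n + N) - T n) {x : ℤ} (hx : ¬(p : ℤ) ^ 2 ∣ T (x + N) - T x)
    {k : ℕ} (hk : k ≠ 0) : padicValInt p (T (x + N * k) - T x) = padicValNat p k + 1 := by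
  have : Fact p.Prime := ⟨hp⟩
  have hΔ0 : T (x + N) - T x ≠ 0 := fun h => hx (h ▸ dvd_zero _)
  have hkΔ : padicValInt p (k * (T (x + N) - T x)) = padicValNat p k + 1 := by
    rw [padicValInt.mul (by exact_mod_cast hk) hΔ0, padicValInt.of_nat,
      padicValInt_eq_of_dvd_of_not_dvd (by simpa using hper x) hx]
  rw [← sub_add_cancel (T (x + N * k) - T x) (k * (T (x + N) - T x)), add_comm,
    padicValInt_add_eq_of_pow_dvd (mul_ne_zero (by exact_mod_cast hk) hΔ0), hkΔ]
  rw [hkΔ]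
  exact hT.pow_padicValNat_add_two_dvd_sub_sub hp hp2 hper x k

theorem padicValInt_add_mul_sub (hT : IsTribonacci_s17 T) (hp : p.Prime) (hp2 : p ≠ 2)
    (hper : ∀ n : ℤ, (p : ℤ) ∣ T (n + N) - T n) {x : ℤ} (hx : ¬(p : ℤ) ^ 2 ∣ T (x + N) - T x)
    {k : ℤ} (hk : k ≠ 0) : padicValInt p (T (x + N * k) - T x) = padicValInt p k + 1 := by
  rcases le_or_gt 0 k with hk0 | hk0
  · lift k to ℕ using hk0
    simpa using hT.padicValInt_add_mul_natCast_sub hp hp2 hper hx (by exact_mod_cast hk)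
  · -- run the sequence forwards from `x + N * k`, where the hypothesis holds by periodicity
    have hy : ¬(p : ℤ) ^ 2 ∣ T (x + N * k + N) - T (x + N * k) := fun hy =>
      hx <| by simpa using dvd_sub hy (hT.sq_dvd_shift_sub_sub hp hp2 hper x k)
    have h := hT.padicValInt_add_mul_natCast_sub hp hp2 hper hy (k := k.natAbs) (by omega)
    rw [Int.ofNat_natAbs_of_nonpos hk0.le, mul_neg, add_neg_cancel_right, ← neg_sub, padicValInt,
      Int.natAbs_neg] at h
    exact h

end IsTribonacci_s17

end Tribonacci

theorem marquesLengyel_success_criterion_general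
    (T : ℤ → ℤ)
    (hT0 : T 0 = 0) (hT1 : T 1 = 1) (hT2 : T 2 = 1)
    (hTrec : ∀ n : ℤ, T (n + 3) = T (n + 2) + T (n + 1) + T n)
    (p : ℕ) (hp : Nat.Prime p) (hp2 : p ≠ 2)
    (N : ℕ) (hNpos : 0 < N)
    (hNper : ∀ n : ℤ, (p : ℤ) ∣ (T (n + N) - T n))
    (hcond : ∀ ℓ : ℕ, ℓ < N → (p : ℤ) ∣ T ℓ →
      ¬ ((p : ℤ) ^ 2 ∣ (T ((ℓ : ℤ) + N) - T ℓ)) ∧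
      ∃ a : ℤ, a ∈ ({0, -1, -4, -17} : Set ℤ) ∧ (N : ℤ) ∣ ((ℓ : ℤ) - a)) :
    MarquesLengyelProp p T := by
  have hT : IsTribonacci_s17 T := ⟨hT0, hT1, hT2, hTrec⟩
  have : Fact p.Prime := ⟨hp⟩
  refine ⟨N, hNpos, fun i hi => ?_⟩
  by_cases hpi : (p : ℤ) ∣ T i
  · obtain ⟨hsq, a, ha, j, hj⟩ := hcond i hi hpi
    have hsqa : ¬(p : ℤ) ^ 2 ∣ T (a + N) - T a := fun h => hsq <| by
      simpa [show a + N * j = i by omega] using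
        dvd_add (hT.sq_dvd_shift_sub_sub hp hp2 hNper a j) h
    refine Or.inr ⟨a, 1 - padicValNat p N, 1, one_pos, ?_, (Set.finite_singleton a).subset ?_⟩
    · exact (Int.natCast_dvd_natCast.2 pow_padicValNat_dvd).trans ⟨-j, by linarith⟩
    · rintro n ⟨hn, hne⟩
      by_contra hna
      obtain ⟨k, hk⟩ : (N : ℤ) ∣ n - a := by simpa using dvd_add hn ⟨j, hj⟩
      have hk0 : k ≠ 0 := by rintro rfl; exact hna (Set.mem_singleton_iff.2 (by omega))
      have h := hT.padicValInt_add_mul_sub hp hp2 hNper hsqa hk0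
      rw [← hk, add_sub_cancel, hT.apply_eq_zero ha, sub_zero] at h
      apply hne
      rw [h, hk, padicValInt.mul (by exact_mod_cast hNpos.ne') hk0, padicValInt.of_nat]
      push_cast
      ring
  · refine Or.inl ⟨0, Set.finite_empty.subset fun n ⟨⟨k, hk⟩, hne⟩ => hne ?_⟩
    have h := dvd_apply_add_mul_sub_apply hNper i k
    exact padicValInt.eq_zero_of_not_dvd fun hpn => hpi (by simpa [← hk] using dvd_sub hpn h)

/-- **Sufficient condition for the Marques–Lengyel conjecture to hold.**
Here `N` is the period of the Tribonacci sequence `T` modulo `p`. If every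
`ℓ ∈ {0, …, N−1}` with `p ∣ T(ℓ)` satisfies `T(ℓ+N) ≢ T(ℓ) (mod p²)` and
`ℓ ≡ a (mod N)` for some `a ∈ {0, −1, −4, −17}`, then the Marques–Lengyel property
holds at `p`. -/
theorem marquesLengyel_success_criterion
    (T : ℤ → ℤ)
    (hT0 : T 0 = 0) (hT1 : T 1 = 1) (hT2 : T 2 = 1)
    (hTrec : ∀ n : ℤ, T (n + 3) = T (n + 2) + T (n + 1) + T n)
    (p : ℕ) (hp : Nat.Prime p) (hp2 : p ≠ 2) (hp11 : p ≠ 11)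
    (N : ℕ) (hNpos : 0 < N)
    (hNper : ∀ n : ℤ, (p : ℤ) ∣ (T (n + N) - T n))
    (hNmin : ∀ M : ℕ, 0 < M → (∀ n : ℤ, (p : ℤ) ∣ (T (n + M) - T n)) → N ≤ M)
    (hcond : ∀ ℓ : ℕ, ℓ < N → (p : ℤ) ∣ T ℓ →
      ¬ ((p : ℤ) ^ 2 ∣ (T ((ℓ : ℤ) + N) - T ℓ)) ∧
      ∃ a : ℤ, a ∈ ({0, -1, -4, -17} : Set ℤ) ∧ (N : ℤ) ∣ ((ℓ : ℤ) - a)) :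
    MarquesLengyelProp p T :=
  marquesLengyel_success_criterion_general T hT0 hT1 hT2 hTrec p hp hp2 N hNpos hNper hcond
end

section
/- Let p be a prime with p ≡ 2 (mod 3), and let λ₁, λ₂, λ₃ ∈ ℤ_p be three pairwise distinct roots of P(X) = X³ − X² − X − 1. If μ₁, μ₂, μ₃ ∈ ℚ_p satisfy μᵢ³ = λᵢ for i = 1, 2, 3, then λ₁·P′(λ₁)⁻¹·μ₁ + λ₂·P′(λ₂)⁻¹·μ₂ + λ₃·P′(λ₃)⁻¹·μ₃ = 0. -/
/-!
For a root `λ` of `P = X³ - X² - X - 1` one has `(λ² - λ)³ = 2λ`, so with `μ³ = λ` the quotient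
`(λ² - λ) / μ` is a cube root of `2`. Since `p ≡ 2 (mod 3)`, cubing is injective on `ℚ_p`, so this
cube root `t` is the same for all three roots, i.e. `μᵢ = (λᵢ² - λᵢ) / t`. The sum becomes
`t⁻¹ · Σ (λᵢ³ - λᵢ²) / P′(λᵢ) = t⁻¹ · Σ (λᵢ + 1) / P′(λᵢ)`, and `Σ f(λᵢ) / P′(λᵢ) = 0` for every
`f` of degree at most `1` (Lagrange interpolation).
-/

open Finset

theorem FiniteField.eq_one_of_pow_eq_one {K : Type*} [GroupWithZero K] [Fintype K] {a : K}
    {n : ℕ} (hn : n.Coprime (Fintype.card K - 1)) (ha : a ≠ 0) (h : a ^ n = 1) : a = 1 :=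
  (pow_eq_one_iff_of_coprime hn).mp ⟨h, FiniteField.pow_card_sub_one_eq_one a ha⟩

namespace PadicInt

variable {p : ℕ} [Fact p.Prime] {n : ℕ}

/-- The geometric sum `1 + b + ⋯ + b^(n-1)` reduces to `n ≠ 0` modulo `p`, so it cannot kill
`b - 1`. -/
theorem eq_one_of_pow_eq_one (hnp : (n : ZMod p) ≠ 0) (hn : n.Coprime (p - 1)) {b : ℤ_[p]}
    (hb : b ^ n = 1) : b = 1 := by
  have hbar : toZMod b = 1 := by
    refine FiniteField.eq_one_of_pow_eq_one (by rwa [ZMod.card]) (fun h0 => hnp ?_)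
      (by rw [← map_pow, hb, map_one])
    rcases n with _ | n
    · exact Nat.cast_zero
    · simpa [h0] using congrArg toZMod hb
  have hgeom : ∑ i ∈ range n, b ^ i ≠ 0 := fun h0 => hnp (by simpa [hbar] using congrArg toZMod h0)
  have := geom_sum_mul b n
  rw [hb, sub_self] at this
  exact sub_eq_zero.mp ((mul_eq_zero.mp this).resolve_left hgeom)

end PadicInt

namespace Padic

variable {p : ℕ} [Fact p.Prime] {n : ℕ}

theorem eq_one_of_pow_eq_one (hnp : (n : ZMod p) ≠ 0) (hn : n.Coprime (p - 1)) {z : ℚ_[p]}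
    (hz : z ^ n = 1) : z = 1 := by
  have hn0 : n ≠ 0 := by rintro rfl; exact hnp Nat.cast_zero
  have hnorm : ‖z‖ = 1 :=
    (pow_eq_one_iff_of_nonneg (norm_nonneg z) hn0).mp (by rw [← norm_pow, hz, norm_one])
  have := PadicInt.eq_one_of_pow_eq_one (b := ⟨z, hnorm.le⟩) hnp hn (PadicInt.ext (by simpa))
  simpa using congrArg ((↑) : ℤ_[p] → ℚ_[p]) this

theorem pow_injective (hnp : (n : ZMod p) ≠ 0) (hn : n.Coprime (p - 1)) :
    Function.Injective fun x : ℚ_[p] => x ^ n := by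
  intro x y (hxy : x ^ n = y ^ n)
  rcases eq_or_ne y 0 with rfl | hy
  · rw [zero_pow (by rintro rfl; exact hnp Nat.cast_zero)] at hxy
    exact pow_eq_zero_iff'.mp hxy |>.1
  · refine (div_eq_one_iff_eq hy).mp (eq_one_of_pow_eq_one hnp hn ?_)
    rw [div_pow, hxy, div_self (pow_ne_zero n hy)]

end Padic

theorem sq_sub_self_pow_three_of_tribonacci {R : Type*} [CommRing R] {x : R}
    (hx : x ^ 3 - x ^ 2 - x - 1 = 0) : (x ^ 2 - x) ^ 3 = 2 * x := by
  linear_combination (x ^ 3 - 2 * x ^ 2 + 2 * x) * hx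

theorem mul_sq_sub_self_eq_of_tribonacci {R : Type*} [CommRing R]
    (hcube : Function.Injective fun x : R => x ^ 3) {x y μ ν : R}
    (hx : x ^ 3 - x ^ 2 - x - 1 = 0) (hy : y ^ 3 - y ^ 2 - y - 1 = 0)
    (hμ : μ ^ 3 = x) (hν : ν ^ 3 = y) : μ * (y ^ 2 - y) = ν * (x ^ 2 - x) := by
  refine hcube ?_
  simp only [mul_pow, hμ, hν, sq_sub_self_pow_three_of_tribonacci hx,
    sq_sub_self_pow_three_of_tribonacci hy]
  ring

theorem tribonacci_deriv_eq_mul_sub {R : Type*} [CommRing R] [IsDomain R] {x₁ x₂ x₃ : R}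
    (h₁ : x₁ ^ 3 - x₁ ^ 2 - x₁ - 1 = 0) (h₂ : x₂ ^ 3 - x₂ ^ 2 - x₂ - 1 = 0)
    (h₃ : x₃ ^ 3 - x₃ ^ 2 - x₃ - 1 = 0) (h12 : x₁ ≠ x₂) (h13 : x₁ ≠ x₃) (h23 : x₂ ≠ x₃) :
    3 * x₁ ^ 2 - 2 * x₁ - 1 = (x₁ - x₂) * (x₁ - x₃) := by
  have e12 : x₁ ^ 2 + x₁ * x₂ + x₂ ^ 2 - x₁ - x₂ - 1 = 0 :=
    (mul_eq_zero.mp (by linear_combination h₁ - h₂ : (x₁ - x₂) * _ = 0)).resolve_left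
      (sub_ne_zero.mpr h12)
  have e13 : x₁ ^ 2 + x₁ * x₃ + x₃ ^ 2 - x₁ - x₃ - 1 = 0 :=
    (mul_eq_zero.mp (by linear_combination h₁ - h₃ : (x₁ - x₃) * _ = 0)).resolve_left
      (sub_ne_zero.mpr h13)
  have hsum : x₁ + x₂ + x₃ - 1 = 0 :=
    (mul_eq_zero.mp (by linear_combination e12 - e13 : (x₂ - x₃) * _ = 0)).resolve_left
      (sub_ne_zero.mpr h23)
  linear_combination (x₁ - x₂) * hsum + e12

theorem sum_linear_div_prod_sub_eq_zero {K : Type*} [Field K] {x₁ x₂ x₃ : K}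
    (h12 : x₁ ≠ x₂) (h13 : x₁ ≠ x₃) (h23 : x₂ ≠ x₃) (a b : K) :
    (a * x₁ + b) / ((x₁ - x₂) * (x₁ - x₃)) + (a * x₂ + b) / ((x₂ - x₁) * (x₂ - x₃)) +
      (a * x₃ + b) / ((x₃ - x₁) * (x₃ - x₂)) = 0 := by
  have := sub_ne_zero.mpr h12
  have := sub_ne_zero.mpr h13
  have := sub_ne_zero.mpr h23
  have := sub_ne_zero.mpr h12.symm
  have := sub_ne_zero.mpr h13.symm
  have := sub_ne_zero.mpr h23.symm
  field_simp
  ring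

theorem tribonacci_cube_root_sum_eq_zero {K : Type*} [Field K] [NeZero (2 : K)]
    (hcube : Function.Injective fun x : K => x ^ 3) {x₁ x₂ x₃ μ₁ μ₂ μ₃ : K}
    (h₁ : x₁ ^ 3 - x₁ ^ 2 - x₁ - 1 = 0) (h₂ : x₂ ^ 3 - x₂ ^ 2 - x₂ - 1 = 0)
    (h₃ : x₃ ^ 3 - x₃ ^ 2 - x₃ - 1 = 0) (h12 : x₁ ≠ x₂) (h13 : x₁ ≠ x₃) (h23 : x₂ ≠ x₃)
    (hμ₁ : μ₁ ^ 3 = x₁) (hμ₂ : μ₂ ^ 3 = x₂) (hμ₃ : μ₃ ^ 3 = x₃) :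
    x₁ * (3 * x₁ ^ 2 - 2 * x₁ - 1)⁻¹ * μ₁ + x₂ * (3 * x₂ ^ 2 - 2 * x₂ - 1)⁻¹ * μ₂ +
      x₃ * (3 * x₃ ^ 2 - 2 * x₃ - 1)⁻¹ * μ₃ = 0 := by
  have hx₁ : x₁ ^ 2 - x₁ ≠ 0 := fun h => by
    have h0 := sq_sub_self_pow_three_of_tribonacci h₁
    rw [h, zero_pow three_ne_zero, eq_comm, mul_eq_zero] at h0
    rcases h0 with h0 | rfl
    · exact two_ne_zero h0
    · norm_num at h₁
  have e₂ := mul_sq_sub_self_eq_of_tribonacci hcube h₁ h₂ hμ₁ hμ₂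
  have e₃ := mul_sq_sub_self_eq_of_tribonacci hcube h₁ h₃ hμ₁ hμ₃
  have hL := sum_linear_div_prod_sub_eq_zero h12 h13 h23 1 1
  rw [tribonacci_deriv_eq_mul_sub h₁ h₂ h₃ h12 h13 h23,
    tribonacci_deriv_eq_mul_sub h₂ h₁ h₃ h12.symm h23 h13,
    tribonacci_deriv_eq_mul_sub h₃ h₁ h₂ h13.symm h23.symm h12]
  refine (mul_eq_zero.mp ?_).resolve_right hx₁
  -- `(x₁² - x₁) · S = μ₁ · Σ (xᵢ + 1) / P′(xᵢ)` by `e₂`, `e₃` and `xᵢ³ - xᵢ² = xᵢ + 1`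
  linear_combination μ₁ * hL - x₂ * ((x₂ - x₁) * (x₂ - x₃))⁻¹ * e₂
    - x₃ * ((x₃ - x₁) * (x₃ - x₂))⁻¹ * e₃ + μ₁ * ((x₁ - x₂) * (x₁ - x₃))⁻¹ * h₁
    + μ₁ * ((x₂ - x₁) * (x₂ - x₃))⁻¹ * h₂ + μ₁ * ((x₃ - x₁) * (x₃ - x₂))⁻¹ * h₃

/-- Let `p ≡ 2 (mod 3)` be a prime and `λ₁, λ₂, λ₃ ∈ ℤ_p` pairwise distinct roots of
`P(X) = X³ − X² − X − 1`. If `μᵢ ∈ ℚ_p` are cube roots of the `λᵢ`, then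
`λ₁·P′(λ₁)⁻¹·μ₁ + λ₂·P′(λ₂)⁻¹·μ₂ + λ₃·P′(λ₃)⁻¹·μ₃ = 0`. -/
theorem padic_tribonacci_cube_root_vanishing
    (p : ℕ) [hp : Fact (Nat.Prime p)] (hp3 : p % 3 = 2)
    (lam₁ lam₂ lam₃ : ℤ_[p])
    (h₁ : lam₁ ^ 3 - lam₁ ^ 2 - lam₁ - 1 = 0)
    (h₂ : lam₂ ^ 3 - lam₂ ^ 2 - lam₂ - 1 = 0)
    (h₃ : lam₃ ^ 3 - lam₃ ^ 2 - lam₃ - 1 = 0)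
    (h12 : lam₁ ≠ lam₂) (h13 : lam₁ ≠ lam₃) (h23 : lam₂ ≠ lam₃)
    (μ₁ μ₂ μ₃ : ℚ_[p])
    (hμ₁ : μ₁ ^ 3 = (lam₁ : ℚ_[p]))
    (hμ₂ : μ₂ ^ 3 = (lam₂ : ℚ_[p]))
    (hμ₃ : μ₃ ^ 3 = (lam₃ : ℚ_[p])) :
    (lam₁ : ℚ_[p]) * (3 * (lam₁ : ℚ_[p]) ^ 2 - 2 * (lam₁ : ℚ_[p]) - 1)⁻¹ * μ₁ +
    (lam₂ : ℚ_[p]) * (3 * (lam₂ : ℚ_[p]) ^ 2 - 2 * (lam₂ : ℚ_[p]) - 1)⁻¹ * μ₂ +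
    (lam₃ : ℚ_[p]) * (3 * (lam₃ : ℚ_[p]) ^ 2 - 2 * (lam₃ : ℚ_[p]) - 1)⁻¹ * μ₃ = 0 := by
  have h3_ne_zero : ((3 : ℕ) : ZMod p) ≠ 0 := by
    rw [Ne, ZMod.natCast_eq_zero_iff]
    intro h
    have := (Nat.prime_dvd_prime_iff_eq hp.out Nat.prime_three).mp h
    omega
  have h3_coprime : Nat.Coprime 3 (p - 1) :=
    (Nat.Prime.coprime_iff_not_dvd Nat.prime_three).mpr (by omega)
  have hroot (lam : ℤ_[p]) (h : lam ^ 3 - lam ^ 2 - lam - 1 = 0) :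
      (lam : ℚ_[p]) ^ 3 - (lam : ℚ_[p]) ^ 2 - lam - 1 = 0 := by
    exact_mod_cast congrArg ((↑) : ℤ_[p] → ℚ_[p]) h
  exact tribonacci_cube_root_sum_eq_zero (Padic.pow_injective h3_ne_zero h3_coprime)
    (hroot _ h₁) (hroot _ h₂) (hroot _ h₃) (fun h => h12 (PadicInt.ext h))
    (fun h => h13 (PadicInt.ext h)) (fun h => h23 (PadicInt.ext h)) hμ₁ hμ₂ hμ₃
end
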